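/- arXiv:math/0503423 — 7 statements merged into one kernel-verified Lean document; each statement's English description precedes it below -/
import Mathlib

section
/- Let X be a locally compact Hausdorff space and k : X × X → [0,∞] a lower semicontinuous symmetric kernel. For any H, L ⊆ X, the sequence of n-th Chebyshev constants M_n(H,L) converges in [0,∞] to its supremum: M_n(H,L) → sup_{n≥1} M_n(H,L) as n → ∞. -/
open MeasureTheory Set ENNReal Filter

variable {X : Type*}

/-- The potential `U^μ(x) = ∫ k(x,y) dμ(y)` of a measure `μ` with respect to the kernel `k`. -/
noncomputable def potential [MeasurableSpace X] (k : X → X → ℝ≥0∞) (μ : Measure X) (x : X) :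
    ℝ≥0∞ :=
  ∫⁻ y, k x y ∂μ

/-- `M1 H` : the regular Borel probability measures concentrated on `H`
(i.e. with outer measure of `H` equal to `1`). -/
def M1 [TopologicalSpace X] [MeasurableSpace X] (H : Set X) : Set (Measure X) :=
  {μ | IsProbabilityMeasure μ ∧ μ.Regular ∧ μ H = 1}

/-- `M1sharp H` : finite convex combinations of Dirac measures at points of `H`. -/
def M1sharp [MeasurableSpace X] (H : Set X) : Set (Measure X) :=
  {μ | ∃ (n : ℕ) (w : Fin n → X) (α : Fin n → ℝ≥0∞),
    (∀ j, w j ∈ H) ∧ (∑ j, α j = 1) ∧ μ = ∑ j, α j • Measure.dirac (w j)}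

/-- The quasi-uniform energy `q(H,L)`. -/
noncomputable def qEnergy [TopologicalSpace X] [MeasurableSpace X] (k : X → X → ℝ≥0∞)
    (H L : Set X) : ℝ≥0∞ :=
  ⨅ μ ∈ M1 H, ⨆ x ∈ L, potential k μ x

/-- The restricted quasi-uniform energy `q^#(H,L)`. -/
noncomputable def qEnergySharp [MeasurableSpace X] (k : X → X → ℝ≥0∞) (H L : Set X) : ℝ≥0∞ :=
  ⨅ μ ∈ M1sharp H, ⨆ x ∈ L, potential k μ x

/-- The dual energy `q̲(H,L)`. -/
noncomputable def qEnergyLow [TopologicalSpace X] [MeasurableSpace X] (k : X → X → ℝ≥0∞)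
    (H L : Set X) : ℝ≥0∞ :=
  ⨆ μ ∈ M1 H, ⨅ x ∈ L, potential k μ x

/-- The restricted dual energy `q̲^#(H,L)`. -/
noncomputable def qEnergyLowSharp [MeasurableSpace X] (k : X → X → ℝ≥0∞) (H L : Set X) : ℝ≥0∞ :=
  ⨆ μ ∈ M1sharp H, ⨅ x ∈ L, potential k μ x

/-- The `n`-th Chebyshev constant `M_n(H,L)`. -/
noncomputable def chebM (k : X → X → ℝ≥0∞) (H L : Set X) (n : ℕ) : ℝ≥0∞ :=
  ⨆ (w : Fin n → X) (_ : ∀ j, w j ∈ H), ⨅ x ∈ L, (∑ j, k x (w j)) / (n : ℝ≥0∞)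

/-- The `n`-th dual Chebyshev constant `M̄_n(H,L)`. -/
noncomputable def chebMbar (k : X → X → ℝ≥0∞) (H L : Set X) (n : ℕ) : ℝ≥0∞ :=
  ⨅ (w : Fin n → X) (_ : ∀ j, w j ∈ H), ⨆ x ∈ L, (∑ j, k x (w j)) / (n : ℝ≥0∞)

/-- The `n`-th diameter `D_n(H)`. -/
noncomputable def diamN (k : X → X → ℝ≥0∞) (H : Set X) (n : ℕ) : ℝ≥0∞ :=
  ⨅ (w : Fin n → X) (_ : ∀ j, w j ∈ H),
    (2 * ∑ p ∈ Finset.univ.filter (fun p : Fin n × Fin n => p.1 < p.2), k (w p.1) (w p.2)) /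
      ((n : ℝ≥0∞) * ((n : ℝ≥0∞) - 1))

/-- The `n`-th rendezvous set `R_n(H,L)`. -/
noncomputable def rendezvousN (k : X → X → ℝ≥0∞) (H L : Set X) (n : ℕ) : Set ℝ≥0∞ :=
  ⋂ (w : Fin n → X) (_ : ∀ j, w j ∈ H),
    Icc (⨅ x ∈ L, (∑ j, k x (w j)) / (n : ℝ≥0∞)) (⨆ x ∈ L, (∑ j, k x (w j)) / (n : ℝ≥0∞))

/-- The rendezvous set `R(H,L) = ⋂_{n ≥ 1} R_n(H,L)`. -/
noncomputable def rendezvous (k : X → X → ℝ≥0∞) (H L : Set X) : Set ℝ≥0∞ :=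
  ⋂ n : ℕ, rendezvousN k H L (n + 1)

/-- The average set `A(H,L)`. -/
noncomputable def averageSet [TopologicalSpace X] [MeasurableSpace X] (k : X → X → ℝ≥0∞)
    (H L : Set X) : Set ℝ≥0∞ :=
  ⋂ μ ∈ M1 H, Icc (⨅ x ∈ L, potential k μ x) (⨆ x ∈ L, potential k μ x)

lemma sum_mod_periodic' (g : ℕ → ℝ≥0∞) (s q : ℕ) :
    ∑ i ∈ Finset.range (s * q), g (i % s) = q * ∑ j ∈ Finset.range s, g j := by
  induction q with
  | zero => simp
  | succ q ih =>
    rw [Nat.mul_succ, Finset.sum_range_add, ih]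
    have h2 : ∑ x ∈ Finset.range s, g ((s * q + x) % s) = ∑ j ∈ Finset.range s, g j := by
      refine Finset.sum_congr rfl fun i hi => ?_
      simp only [Finset.mem_range] at hi
      congr 1
      rw [add_comm, Nat.add_mul_mod_self_left, Nat.mod_eq_of_lt hi]
    rw [h2]
    push_cast
    ring

lemma chebM_key' {X : Type*} (k : X → X → ℝ≥0∞) (H L : Set X) {s : ℕ} (hs : 0 < s)
    (w : Fin s → X) (hw : ∀ j, w j ∈ H) (n : ℕ) :
    ((s * (n / s) : ℕ) : ℝ≥0∞) / (n : ℝ≥0∞) * (⨅ x ∈ L, (∑ j, k x (w j)) / (s : ℝ≥0∞))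
      ≤ chebM k H L n := by
  set w' : Fin n → X := fun i => w ⟨i % s, Nat.mod_lt _ hs⟩ with hw'
  have h1 : (⨅ x ∈ L, (∑ i, k x (w' i)) / (n : ℝ≥0∞)) ≤ chebM k H L n :=
    le_iSup₂_of_le w' (fun i => hw _) le_rfl
  refine le_trans (le_iInf₂ fun x hx => ?_) h1
  set g : ℕ → ℝ≥0∞ := fun j => k x (w ⟨j % s, Nat.mod_lt _ hs⟩) with hg
  have hS : (∑ j, k x (w j)) = ∑ j ∈ Finset.range s, g j := by
    rw [← Fin.sum_univ_eq_sum_range]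
    refine Finset.sum_congr rfl fun j _ => ?_
    simp [hg, Nat.mod_eq_of_lt j.isLt]
  have hS' : (∑ i, k x (w' i)) = ∑ i ∈ Finset.range n, g i := by
    rw [← Fin.sum_univ_eq_sum_range]
  have hnum : ((n / s : ℕ) : ℝ≥0∞) * ∑ j, k x (w j) ≤ ∑ i, k x (w' i) := by
    rw [hS, hS']
    have := sum_mod_periodic' g s (n / s)
    have hmod : ∀ i, g (i % s) = g i := by
      intro i
      have h : (⟨i % s % s, Nat.mod_lt _ hs⟩ : Fin s) = ⟨i % s, Nat.mod_lt _ hs⟩ := by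
        ext; exact Nat.mod_mod_of_dvd _ dvd_rfl
      simp only [hg, h]
    simp only [hmod] at this
    rw [← this]
    exact Finset.sum_le_sum_of_subset
      (Finset.range_subset_range.mpr (by rw [mul_comm]; exact Nat.div_mul_le_self n s))
  calc ((s * (n / s) : ℕ) : ℝ≥0∞) / (n : ℝ≥0∞) * (⨅ x ∈ L, (∑ j, k x (w j)) / (s : ℝ≥0∞))
      ≤ ((s * (n / s) : ℕ) : ℝ≥0∞) / (n : ℝ≥0∞) * ((∑ j, k x (w j)) / (s : ℝ≥0∞)) :=
        mul_le_mul_right (biInf_le _ hx) _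
    _ = ((n / s : ℕ) : ℝ≥0∞) * (∑ j, k x (w j)) / (n : ℝ≥0∞) := by
        push_cast
        have hs1 : (s : ℝ≥0∞) * (s : ℝ≥0∞)⁻¹ = 1 :=
          ENNReal.mul_inv_cancel (by exact_mod_cast hs.ne') (by simp)
        rw [div_eq_mul_inv, div_eq_mul_inv, div_eq_mul_inv]
        rw [show (s : ℝ≥0∞) * ((n / s : ℕ) : ℝ≥0∞) * ((n : ℝ≥0∞))⁻¹ *
            ((∑ j, k x (w j)) * ((s : ℝ≥0∞))⁻¹) =
            ((s : ℝ≥0∞) * ((s : ℝ≥0∞))⁻¹) * (((n / s : ℕ) : ℝ≥0∞) * (∑ j, k x (w j)) *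
              ((n : ℝ≥0∞))⁻¹) by ring, hs1, one_mul]
    _ ≤ (∑ i, k x (w' i)) / (n : ℝ≥0∞) := ENNReal.div_le_div_right hnum _


/-- The sequence `M_n(H,L)` (`n ≥ 1`) of Chebyshev constants converges in `[0,∞]`
to its supremum `sup_{n ≥ 1} M_n(H,L)`. -/
theorem chebM_tendsto_iSup
    {X : Type*} [TopologicalSpace X] [LocallyCompactSpace X] [T2Space X]
    (k : X → X → ℝ≥0∞)
    (hk : LowerSemicontinuous fun p : X × X => k p.1 p.2)
    (hksymm : ∀ x y, k x y = k y x)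
    (H L : Set X) :
    Tendsto (fun n : ℕ => chebM k H L (n + 1)) atTop
      (nhds (⨆ n : ℕ, chebM k H L (n + 1))) := by
  have key : ∀ {s : ℕ}, 0 < s → ∀ (w : Fin s → X), (∀ j, w j ∈ H) →
      (⨅ x ∈ L, (∑ j, k x (w j)) / (s : ℝ≥0∞)) ≤
        liminf (fun n : ℕ => chebM k H L (n + 1)) atTop := by
    intro s hs w hw
    set v := ⨅ x ∈ L, (∑ j, k x (w j)) / (s : ℝ≥0∞) with hv
    rw [le_liminf_iff]
    intro b hb
    rcases eq_or_ne v ⊤ with hvtop | hvtop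
    · -- v = ⊤ case
      filter_upwards [eventually_ge_atTop (s + 1)] with n hn
      have hkey := chebM_key' k H L hs w hw (n + 1)
      rw [← hv, hvtop] at hkey
      have hpos : ((s * ((n + 1) / s) : ℕ) : ℝ≥0∞) / ((n + 1 : ℕ) : ℝ≥0∞) ≠ 0 := by
        refine (ENNReal.div_pos ?_ (by simp)).ne'
        have : 0 < s * ((n + 1) / s) := by
          have : 1 ≤ (n + 1) / s := (Nat.one_le_div_iff hs).mpr (by omega)
          positivity
        exact_mod_cast this.ne'
      rw [ENNReal.mul_top hpos] at hkey
      calc b < ⊤ := hb.trans_le (by rw [hvtop])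
        _ ≤ chebM k H L (n + 1) := le_of_eq (top_le_iff.mp hkey).symm
    · -- v < ⊤ case
      have hb_top : b ≠ ⊤ := (hb.trans_le le_top).ne
      set ε := v - b with hε
      have hε0 : ε ≠ 0 := (tsub_pos_of_lt hb).ne'
      have hεtop : ε ≠ ⊤ := by
        refine ne_top_of_le_ne_top hvtop ?_
        exact tsub_le_self
      have hbε : b + ε = v := add_tsub_cancel_of_le hb.le
      have hbs_top : b * (s : ℝ≥0∞) ≠ ⊤ := ENNReal.mul_ne_top hb_top (by simp)
      obtain ⟨K, hK⟩ := ENNReal.exists_nat_gt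
        (ENNReal.div_lt_top hbs_top hε0).ne
      have hK' : b * (s : ℝ≥0∞) < (K : ℝ≥0∞) * ε :=
        (ENNReal.div_lt_iff (Or.inl hε0) (Or.inl hεtop)).mp hK
      filter_upwards [eventually_ge_atTop (K + s)] with n hn
      set m := n + 1 with hm
      set t := m - s with ht
      have hts : t + s = m := by omega
      have htK : K ≤ t := by omega
      -- b < (t/m) * v
      have hstep : b < ((t : ℕ) : ℝ≥0∞) / ((m : ℕ) : ℝ≥0∞) * v := by
        have hm0 : ((m : ℕ) : ℝ≥0∞) ≠ 0 := by exact_mod_cast (by omega : m ≠ 0)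
        have hmtop : ((m : ℕ) : ℝ≥0∞) ≠ ⊤ := by simp
        rw [show ((t : ℕ) : ℝ≥0∞) / ((m : ℕ) : ℝ≥0∞) * v = ((t : ℕ) : ℝ≥0∞) * v / ((m : ℕ) : ℝ≥0∞) by rw [div_eq_mul_inv, div_eq_mul_inv]; ring, ENNReal.lt_div_iff_mul_lt (Or.inl hm0) (Or.inl hmtop)]
        have hbm : b * ((m : ℕ) : ℝ≥0∞) = b * (t : ℝ≥0∞) + b * (s : ℝ≥0∞) := by
          rw [← mul_add]
          congr 1
          exact_mod_cast congrArg (fun x : ℕ => (x : ℝ≥0∞)) hts.symm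
        have htv : ((t : ℕ) : ℝ≥0∞) * v = (t : ℝ≥0∞) * b + (t : ℝ≥0∞) * ε := by
          rw [← mul_add, hbε]
        rw [hbm, htv, mul_comm b ((t : ℕ) : ℝ≥0∞)]
        refine ENNReal.add_lt_add_left (ENNReal.mul_ne_top (by simp) hb_top) ?_
        calc b * (s : ℝ≥0∞) < (K : ℝ≥0∞) * ε := hK'
          _ ≤ (t : ℝ≥0∞) * ε := mul_le_mul_left (by exact_mod_cast htK) ε
      have hcmp : ((t : ℕ) : ℝ≥0∞) / ((m : ℕ) : ℝ≥0∞) * v ≤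
          ((s * (m / s) : ℕ) : ℝ≥0∞) / ((m : ℕ) : ℝ≥0∞) * v := by
        refine mul_le_mul_left (ENNReal.div_le_div_right ?_ _) v
        have : t ≤ s * (m / s) := by
          have h1 := Nat.mod_add_div m s
          have h2 := Nat.mod_lt m hs
          omega
        exact_mod_cast this
      calc b < ((t : ℕ) : ℝ≥0∞) / ((m : ℕ) : ℝ≥0∞) * v := hstep
        _ ≤ ((s * (m / s) : ℕ) : ℝ≥0∞) / ((m : ℕ) : ℝ≥0∞) * v := hcmp
        _ ≤ chebM k H L m := chebM_key' k H L hs w hw m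
  refine tendsto_of_le_liminf_of_limsup_le ?_ limsup_le_iSup
  refine iSup_le fun n => ?_
  rw [chebM]
  refine iSup₂_le fun w hw => ?_
  exact key (Nat.succ_pos n) w hw
end

section
/- Let K be a compact Hausdorff topological space and let k : K × K → ℝ be continuous. Then the map μ ↦ U^μ, where U^μ(x) := ∫_K k(x,y) dμ(y), is continuous from the space P(K) of Borel probability measures on K with the topology of weak convergence to the space C(K) of continuous real-valued functions on K with the supremum norm. -/
open MeasureTheory Set Filter Metric

/-- For a compact Hausdorff space `K` and a continuous kernel `k : K × K → ℝ`,
the map `μ ↦ U^μ`, `U^μ(x) = ∫ k(x,y) dμ(y)`, is continuous from the Borel probability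
measures on `K` with the topology of weak convergence to `C(K)` with the sup norm. -/
theorem continuous_potential_of_continuous_kernel
    {K : Type*} [TopologicalSpace K] [CompactSpace K] [T2Space K]
    [MeasurableSpace K] [BorelSpace K]
    (k : K × K → ℝ) (hk : Continuous k)
    (U : ProbabilityMeasure K → C(K, ℝ))
    (hU : ∀ (μ : ProbabilityMeasure K) (x : K), U μ x = ∫ y, k (x, y) ∂(μ : Measure K)) :
    Continuous U := by
  classical
  -- the curried kernel: `x ↦ k(x, ·)` as a continuous family of continuous functions
  set Φ : C(K, C(K, ℝ)) := ContinuousMap.curry ⟨k, hk⟩ with hΦdef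
  have hΦ : ∀ x y, Φ x y = k (x, y) := fun x y => rfl
  -- integrability of continuous functions against probability measures
  have hint : ∀ (μ : ProbabilityMeasure K) (x : K),
      Integrable (fun y => k (x, y)) (μ : Measure K) := by
    intro μ x
    exact (Φ x).continuous.integrable_of_hasCompactSupport
      (HasCompactSupport.of_compactSpace _)
  -- bound: for probability measures, `‖∫ g dμ‖ ≤ ‖g‖∞`
  have key : ∀ (μ : ProbabilityMeasure K) (x i : K),
      |∫ y, k (x, y) ∂(μ : Measure K) - ∫ y, k (i, y) ∂(μ : Measure K)|
        ≤ dist (Φ x) (Φ i) := by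
    intro μ x i
    rw [← integral_sub (hint μ x) (hint μ i)]
    have := norm_integral_le_of_norm_le_const (μ := (μ : Measure K))
      (f := fun y => k (x, y) - k (i, y)) (C := dist (Φ x) (Φ i))
      (Filter.Eventually.of_forall fun y => by
        simpa [Real.norm_eq_abs, Real.dist_eq, hΦ] using
          ContinuousMap.dist_apply_le_dist (f := Φ x) (g := Φ i) y)
    simpa [Real.norm_eq_abs] using this
  rw [continuous_iff_continuousAt]
  intro μ₀
  rw [ContinuousAt, Metric.tendsto_nhds]
  intro ε hε
  -- finite (ε/4)-net for the compact family `Φ x`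
  have hcomp : IsCompact (Set.range Φ) := isCompact_range Φ.continuous
  obtain ⟨t, ht⟩ := hcomp.elim_finite_subcover (fun x : K => Metric.ball (Φ x) (ε / 4))
    (fun x => Metric.isOpen_ball)
    (by rintro f ⟨x, rfl⟩; exact mem_iUnion.2 ⟨x, Metric.mem_ball_self (by linarith)⟩)
  -- the set of measures whose integrals of the net functions are close to those of μ₀
  have hopen : ∀ i ∈ t, IsOpen {μ : ProbabilityMeasure K |
      |∫ y, k (i, y) ∂(μ : Measure K) - ∫ y, k (i, y) ∂(μ₀ : Measure K)| < ε / 4} := by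
    intro i _
    have hc : Continuous fun μ : ProbabilityMeasure K =>
        ∫ y, (BoundedContinuousFunction.mkOfCompact (Φ i)) y ∂(μ : Measure K) :=
      ProbabilityMeasure.continuous_integral_boundedContinuousFunction _
    have : Continuous fun μ : ProbabilityMeasure K =>
        |∫ y, k (i, y) ∂(μ : Measure K) - ∫ y, k (i, y) ∂(μ₀ : Measure K)| := by
      simpa [hΦ] using (hc.sub continuous_const).abs
    exact isOpen_lt this continuous_const
  obtain ⟨V, hVsub, hVopen, hμ₀V⟩ :
      ∃ V, (V ⊆ {μ : ProbabilityMeasure K | ∀ i ∈ t,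
        |∫ y, k (i, y) ∂(μ : Measure K) - ∫ y, k (i, y) ∂(μ₀ : Measure K)| < ε / 4})
        ∧ IsOpen V ∧ μ₀ ∈ V := by
    refine ⟨⋂ i ∈ t, {μ : ProbabilityMeasure K |
      |∫ y, k (i, y) ∂(μ : Measure K) - ∫ y, k (i, y) ∂(μ₀ : Measure K)| < ε / 4},
      ?_, isOpen_biInter_finset hopen, ?_⟩
    · intro μ hμ i hi
      exact mem_iInter₂.mp hμ i hi
    · exact mem_iInter₂.mpr fun i _ => by simp [abs_of_nonneg]; linarith
  filter_upwards [hVopen.mem_nhds hμ₀V] with μ hμ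
  have hμV : ∀ i ∈ t,
      |∫ y, k (i, y) ∂(μ : Measure K) - ∫ y, k (i, y) ∂(μ₀ : Measure K)| < ε / 4 :=
    hVsub hμ
  -- now bound the sup distance
  have hle : dist (U μ) (U μ₀) ≤ 3 * (ε / 4) := by
    refine ContinuousMap.dist_le (by linarith) |>.mpr fun x => ?_
    obtain ⟨i, hit, hxi⟩ : ∃ i ∈ t, dist (Φ x) (Φ i) < ε / 4 := by
      have := ht ⟨x, rfl⟩
      simpa using this
    have h1 := key μ x i
    have h2 := hμV i hit
    have h3 := key μ₀ x i
    rw [Real.dist_eq, hU, hU]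
    calc |∫ y, k (x, y) ∂(μ : Measure K) - ∫ y, k (x, y) ∂(μ₀ : Measure K)|
        ≤ |∫ y, k (x, y) ∂(μ : Measure K) - ∫ y, k (i, y) ∂(μ : Measure K)|
          + |∫ y, k (i, y) ∂(μ : Measure K) - ∫ y, k (i, y) ∂(μ₀ : Measure K)|
          + |∫ y, k (i, y) ∂(μ₀ : Measure K) - ∫ y, k (x, y) ∂(μ₀ : Measure K)| := by
          have := abs_sub_le (∫ y, k (x, y) ∂(μ : Measure K)) (∫ y, k (i, y) ∂(μ : Measure K))
            (∫ y, k (x, y) ∂(μ₀ : Measure K))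
          have h2 := abs_sub_le (∫ y, k (i, y) ∂(μ : Measure K)) (∫ y, k (i, y) ∂(μ₀ : Measure K))
            (∫ y, k (x, y) ∂(μ₀ : Measure K))
          linarith
      _ ≤ 3 * (ε / 4) := by
          have h3' : |∫ y, k (i, y) ∂(μ₀ : Measure K) - ∫ y, k (x, y) ∂(μ₀ : Measure K)|
              ≤ dist (Φ x) (Φ i) := by rw [abs_sub_comm]; exact h3
          linarith
  linarith
end

section
/- Let X be a locally compact Hausdorff space and let k : X × X → [0,∞) be a continuous, symmetric, nonnegative (finite-valued) kernel. Then for every set H ⊆ X and every compact set K ⊆ X one has q(H,K) = q^#(H,K), i.e. inf_{μ∈M1(H)} sup_{x∈K} U^μ(x) = inf_{μ∈M1^#(H)} sup_{x∈K} U^μ(x). -/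
open MeasureTheory Set ENNReal Filter

variable {X : Type*}

/-!
Finite combinations of Dirac masses are regular probability measures, so `q ≤ q^#`.
Conversely, let `μ ∈ M1 H`. By inner regularity all but a small mass `r` of `μ` lies on a
compact set `C`. Since `k` is jointly continuous and `K` is compact, every point has a
neighbourhood on which `k x ·` oscillates by at most `η`, uniformly in `x ∈ K`; finitely many of
them cover `C`, and disjointifying gives measurable pieces `E i`. Moving the mass `μ (E i)` to a
point of `E i ∩ H` (one exists whenever `μ (E i) ≠ 0`, because `μ H = 1`) and the mass `r` to a
fixed point of `H` gives a discrete measure whose potential exceeds that of `μ` by at most `2η`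
on `K`.
-/

open Function
open scoped NNReal Topology

instance MeasureTheory.Measure.InnerRegular.dirac [TopologicalSpace X] [MeasurableSpace X]
    [MeasurableSingletonClass X] (a : X) : (Measure.dirac a).InnerRegular where
  innerRegular s _ r hr := by
    refine ⟨s ∩ {a}, inter_subset_left, subsingleton_singleton.anti inter_subset_right
      |>.isCompact, ?_⟩
    by_cases ha : a ∈ s
    · simpa [ha] using hr
    · simp [Measure.dirac_apply, ha] at hr

section Discrete

variable [MeasurableSpace X]

theorem potential_finset_sum_smul_dirac [MeasurableSingletonClass X] (k : X → X → ℝ≥0∞)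
    {ι : Type*} (s : Finset ι) (α : ι → ℝ≥0∞) (w : ι → X) (x : X) :
    potential k (∑ i ∈ s, α i • Measure.dirac (w i)) x = ∑ i ∈ s, α i * k x (w i) := by
  simp [potential, lintegral_finsetSum_measure, lintegral_dirac]

theorem sum_smul_dirac_mem_M1sharp {ι : Type*} [Fintype ι] {H : Set X} {w : ι → X}
    (hw : ∀ i, w i ∈ H) {α : ι → ℝ≥0∞} (hα : ∑ i, α i = 1) :
    ∑ i, α i • Measure.dirac (w i) ∈ M1sharp H := by
  let e := Fintype.equivFin ι
  refine ⟨Fintype.card ι, w ∘ e.symm, α ∘ e.symm, fun j => hw _, ?_, ?_⟩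
  · rwa [Function.comp_def, e.symm.sum_comp α]
  · exact (e.symm.sum_comp fun i => α i • Measure.dirac (w i)).symm

theorem M1sharp_subset_M1 [TopologicalSpace X] [T2Space X] [BorelSpace X] (H : Set X) :
    M1sharp H ⊆ M1 H := by
  rintro _ ⟨n, w, α, hw, hα, rfl⟩
  have : IsProbabilityMeasure (∑ j, α j • Measure.dirac (w j)) :=
    ⟨by simp [Measure.finsetSum_apply, hα]⟩
  refine ⟨this, inferInstance, ?_⟩
  simp [Measure.finsetSum_apply, Measure.dirac_apply_of_mem (hw _), hα]

end Discrete

theorem exists_mem_nhds_forall_coe_le_add {Y : Type*} [TopologicalSpace X] [TopologicalSpace Y]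
    {k : X → Y → ℝ≥0} (hk : Continuous fun p : X × Y => k p.1 p.2) {K : Set X}
    (hK : IsCompact K) {η : ℝ≥0} (hη : 0 < η) (y : Y) :
    ∃ V ∈ 𝓝 y, ∀ x ∈ K, ∀ z ∈ V, ∀ z' ∈ V, (k x z : ℝ≥0∞) ≤ k x z' + η := by
  obtain ⟨V, hV, hVk⟩ := hK.mem_uniformity_of_prod (f := fun z x => k x z)
    (hk.comp continuous_swap).continuousOn (mem_univ y) (Metric.dist_mem_uniformity (half_pos hη))
  refine ⟨V, nhdsWithin_univ y ▸ hV, fun x hx z hz z' hz' => ?_⟩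
  have hz : dist (k x z) (k x y) < η / 2 := hVk z hz x hx
  have hz' : dist (k x z') (k x y) < η / 2 := hVk z' hz' x hx
  rw [NNReal.dist_eq, abs_sub_lt_iff] at hz hz'
  have : k x z ≤ k x z' + η := by
    rw [← NNReal.coe_le_coe, NNReal.coe_add]
    linarith [hz.1, hz'.2]
  exact_mod_cast this

theorem IsCompact.exists_disjoint_measurableSet_cover [TopologicalSpace X] [MeasurableSpace X]
    [OpensMeasurableSpace X] {C : Set X} (hC : IsCompact C) {P : Set X → Prop} (hP : Antitone P)
    (hnhds : ∀ x ∈ C, ∃ V ∈ 𝓝 x, P V) :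
    ∃ (n : ℕ) (E : Fin n → Set X), (∀ i, MeasurableSet (E i)) ∧ Pairwise (Disjoint on E) ∧
      C ⊆ ⋃ i, E i ∧ ∀ i, P (E i) := by
  choose! V hV hPV using hnhds
  obtain ⟨t, htC, hCt⟩ := hC.elim_nhds_subcover (fun x => interior (V x))
    fun x hx => interior_mem_nhds.2 (hV x hx)
  let U : Fin t.card → Set X := fun i => interior (V (t.equivFin.symm i))
  refine ⟨t.card, disjointed U,
    fun i => disjointedRec (fun _ _ h => h.diff isOpen_interior.measurableSet)
      isOpen_interior.measurableSet,
    disjoint_disjointed U, ?_,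
    fun i => hP ((disjointed_subset U i).trans interior_subset)
      (hPV _ (htC _ (t.equivFin.symm i).2))⟩
  rw [iUnion_disjointed]
  intro z hz
  obtain ⟨x, hxt, hzx⟩ := mem_iUnion₂.1 (hCt hz)
  exact mem_iUnion.2 ⟨t.equivFin ⟨x, hxt⟩, by simpa [U] using hzx⟩

section Measure

variable [MeasurableSpace X] {μ : Measure X}

theorem nonempty_inter_of_measure_eq_measure_univ [IsFiniteMeasure μ] {H E : Set X}
    (hH : μ H = μ univ) (hE : MeasurableSet E) (hE0 : μ E ≠ 0) : (E ∩ H).Nonempty := by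
  have := Measure.measure_inter_eq_of_measure_eq hE hH (subset_univ H) (measure_ne_top μ H)
  rw [univ_inter] at this
  exact nonempty_of_measure_ne_zero (inter_comm E H ▸ this ▸ hE0)

theorem sum_measure_mul_le_setLIntegral_iUnion_add {ι : Type*} [Fintype ι] {E : ι → Set X}
    (hE : ∀ i, MeasurableSet (E i)) (hd : Pairwise (Disjoint on E)) {f : X → ℝ≥0∞}
    {η : ℝ≥0∞} (hf : ∀ i, ∀ y ∈ E i, ∀ z ∈ E i, f y ≤ f z + η) {w : ι → X}
    (hw : ∀ i, μ (E i) ≠ 0 → w i ∈ E i) :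
    ∑ i, μ (E i) * f (w i) ≤ ∫⁻ y in ⋃ i, E i, f y ∂μ + η * μ (⋃ i, E i) := by
  have piece (i : ι) : μ (E i) * f (w i) ≤ ∫⁻ y in E i, f y ∂μ + η * μ (E i) := by
    by_cases h0 : μ (E i) = 0
    · simp [h0]
    calc μ (E i) * f (w i) = ∫⁻ _ in E i, f (w i) ∂μ := by rw [setLIntegral_const, mul_comm]
      _ ≤ ∫⁻ y in E i, (f y + η) ∂μ := setLIntegral_mono' (hE i) fun y hy => hf i _ (hw i h0) y hy
      _ = ∫⁻ y in E i, f y ∂μ + η * μ (E i) := by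
        rw [lintegral_add_right _ measurable_const, setLIntegral_const]
  calc ∑ i, μ (E i) * f (w i) ≤ ∑ i, (∫⁻ y in E i, f y ∂μ + η * μ (E i)) :=
        Finset.sum_le_sum fun i _ => piece i
    _ = ∫⁻ y in ⋃ i, E i, f y ∂μ + η * μ (⋃ i, E i) := by
        rw [Finset.sum_add_distrib, lintegral_iUnion hE hd, measure_iUnion hd hE, tsum_fintype,
          tsum_fintype, Finset.mul_sum]

end Measure

theorem exists_mem_M1sharp_potential_le_add_of_disjoint [MeasurableSpace X]
    [MeasurableSingletonClass X] {k : X → X → ℝ≥0∞} {H K : Set X} {μ : Measure X}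
    [IsProbabilityMeasure μ] (hH : μ H = 1) {n : ℕ} {E : Fin n → Set X}
    (hE : ∀ i, MeasurableSet (E i)) (hd : Pairwise (Disjoint on E)) {η : ℝ≥0∞}
    (hEk : ∀ i, ∀ x ∈ K, ∀ y ∈ E i, ∀ z ∈ E i, k x y ≤ k x z + η) {w₀ : X} (hw₀ : w₀ ∈ H)
    (hrem : ∀ x ∈ K, (1 - μ (⋃ i, E i)) * k x w₀ ≤ η) :
    ∃ ν ∈ M1sharp H, ∀ x ∈ K, potential k ν x ≤ potential k μ x + 2 * η := by
  have hw (i : Fin n) : ∃ w ∈ H, μ (E i) ≠ 0 → w ∈ E i := by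
    by_cases h0 : μ (E i) = 0
    · exact ⟨w₀, hw₀, fun h => absurd h0 h⟩
    · obtain ⟨w, hwE, hwH⟩ := nonempty_inter_of_measure_eq_measure_univ
        (hH.trans measure_univ.symm) (hE i) h0
      exact ⟨w, hwH, fun _ => hwE⟩
  choose w hwH hwE using hw
  set U := ⋃ i, E i
  let α : Option (Fin n) → ℝ≥0∞ := fun o => o.elim (1 - μ U) (μ ∘ E)
  let v : Option (Fin n) → X := fun o => o.elim w₀ w
  refine ⟨∑ o, α o • Measure.dirac (v o), sum_smul_dirac_mem_M1sharp ?_ ?_, fun x hx => ?_⟩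
  · rintro (_ | i)
    exacts [hw₀, hwH i]
  · have hμU : μ U = ∑ i, μ (E i) := by rw [measure_iUnion hd hE, tsum_fintype]
    simp only [Fintype.sum_option, α, Option.elim, Function.comp_apply, ← hμU]
    exact tsub_add_cancel_of_le prob_le_one
  rw [potential_finset_sum_smul_dirac, Fintype.sum_option]
  calc (1 - μ U) * k x w₀ + ∑ i, μ (E i) * k x (w i)
      ≤ η + (∫⁻ y in U, k x y ∂μ + η * μ U) :=
        add_le_add (hrem x hx)
          (sum_measure_mul_le_setLIntegral_iUnion_add hE hd (fun i => hEk i x hx) hwE)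
    _ ≤ η + (potential k μ x + η * 1) := by
        gcongr
        exacts [setLIntegral_le_lintegral _ _, prob_le_one]
    _ = potential k μ x + 2 * η := by ring

theorem exists_mem_M1sharp_potential_le_add [TopologicalSpace X] [MeasurableSpace X]
    [OpensMeasurableSpace X] [MeasurableSingletonClass X] {k : X → X → ℝ≥0}
    (hk : Continuous fun p : X × X => k p.1 p.2) {K : Set X} (hK : IsCompact K) {H : Set X}
    {μ : Measure X} (hμ : μ ∈ M1 H) {ε : ℝ≥0} (hε : 0 < ε) :
    ∃ ν ∈ M1sharp H, ∀ x ∈ K, potential (fun x y => (k x y : ℝ≥0∞)) ν x ≤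
      potential (fun x y => (k x y : ℝ≥0∞)) μ x + ε := by
  obtain ⟨hprob, hreg, hH⟩ := hμ
  obtain ⟨w₀, hw₀⟩ : H.Nonempty := nonempty_of_measure_ne_zero (μ := μ) (by simp [hH])
  obtain ⟨M, hM⟩ : ∃ M : ℝ≥0, ∀ x ∈ K, k x w₀ ≤ M := by
    obtain ⟨M, hM⟩ := (hK.image (hk.comp (continuous_id.prodMk continuous_const))).bddAbove
    exact ⟨M, fun x hx => hM (mem_image_of_mem _ hx)⟩
  obtain ⟨η, hη, rfl⟩ : ∃ η : ℝ≥0, 0 < η ∧ 2 * η = ε :=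
    ⟨ε / 2, half_pos hε, mul_div_cancel₀ _ two_ne_zero⟩
  have hηM : (η / M : ℝ≥0∞) ≠ 0 := (ENNReal.div_pos_iff.2 ⟨by simpa using hη.ne', by simp⟩).ne'
  obtain ⟨C, -, hC, hμC⟩ := MeasurableSet.univ.exists_isCompact_lt_add (measure_ne_top μ univ) hηM
  obtain ⟨n, E, hE, hd, hCE, hEk⟩ := hC.exists_disjoint_measurableSet_cover
    (P := fun V => ∀ x ∈ K, ∀ y ∈ V, ∀ z ∈ V, (k x y : ℝ≥0∞) ≤ k x z + η)
    (fun V W hVW h x hx y hy z hz => h x hx y (hVW hy) z (hVW hz))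
    fun y _ => exists_mem_nhds_forall_coe_le_add hk hK hη y
  have hrem : 1 - μ (⋃ i, E i) ≤ η / M := by
    rw [tsub_le_iff_left, ← measure_univ (μ := μ)]
    exact hμC.le.trans (by gcongr)
  push_cast
  refine exists_mem_M1sharp_potential_le_add_of_disjoint hH hE hd hEk hw₀ fun x hx => ?_
  calc (1 - μ (⋃ i, E i)) * k x w₀ ≤ (1 - μ (⋃ i, E i)) * M := by gcongr; exact_mod_cast hM x hx
    _ ≤ η := ENNReal.mul_le_of_le_div hrem

theorem qEnergy_eq_qEnergySharp_of_continuous_general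
    {X : Type*} [TopologicalSpace X] [T2Space X]
    [MeasurableSpace X] [BorelSpace X]
    (k : X → X → NNReal)
    (hk : Continuous fun p : X × X => k p.1 p.2)
    (H K : Set X) (hK : IsCompact K) :
    qEnergy (fun x y => (k x y : ℝ≥0∞)) H K = qEnergySharp (fun x y => (k x y : ℝ≥0∞)) H K := by
  refine le_antisymm (biInf_mono fun μ hμ => M1sharp_subset_M1 H hμ) (le_iInf₂ fun μ hμ => ?_)
  refine ENNReal.le_of_forall_pos_le_add fun ε hε _ => ?_
  obtain ⟨ν, hν, hνμ⟩ := exists_mem_M1sharp_potential_le_add hk hK hμ hε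
  refine iInf₂_le_of_le ν hν (iSup₂_le fun x hx => (hνμ x hx).trans ?_)
  gcongr
  exact le_iSup₂ (f := fun x _ => potential (fun x y => (k x y : ℝ≥0∞)) μ x) x hx

/-- For a continuous, symmetric, finite-valued kernel and compact `K`,
`q(H,K) = q^#(H,K)` for every `H ⊆ X`. -/
theorem qEnergy_eq_qEnergySharp_of_continuous
    {X : Type*} [TopologicalSpace X] [LocallyCompactSpace X] [T2Space X]
    [MeasurableSpace X] [BorelSpace X]
    (k : X → X → NNReal)
    (hk : Continuous fun p : X × X => k p.1 p.2)
    (hksymm : ∀ x y, k x y = k y x)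
    (H K : Set X) (hK : IsCompact K) :
    qEnergy (fun x y => (k x y : ℝ≥0∞)) H K = qEnergySharp (fun x y => (k x y : ℝ≥0∞)) H K :=
  qEnergy_eq_qEnergySharp_of_continuous_general k hk H K hK
end

section
/- Let X be a locally compact Hausdorff space and k : X × X → [0,∞] a lower semicontinuous symmetric kernel. For any H, L ⊆ X, the sequence of n-th dual Chebyshev constants M̄_n(H,L) converges in [0,∞]; in fact M̄_n(H,L) → inf_{n≥1} M̄_n(H,L) as n → ∞. -/
open MeasureTheory Set ENNReal Filter

variable {X : Type*}

private lemma aux_sum_mod_cycle (m c : ℕ) (f : ℕ → ℝ≥0∞) :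
    ∑ i ∈ Finset.range (c * (m+1)), f (i % (m+1)) = c * ∑ j ∈ Finset.range (m+1), f j := by
  induction c with
  | zero => simp
  | succ c ih =>
    rw [Nat.succ_mul, Finset.sum_range_add]
    simp only [ih]
    have h1 : ∀ i ∈ Finset.range (m+1), f ((c * (m+1) + i) % (m+1)) = f (i % (m+1)) := by
      intro i _
      rw [mul_comm, Nat.mul_add_mod]
    rw [Finset.sum_congr rfl h1]
    have h2 : ∀ i ∈ Finset.range (m+1), f (i % (m+1)) = f i := by
      intro i hi
      rw [Nat.mod_eq_of_lt (Finset.mem_range.mp hi)]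
    rw [Finset.sum_congr rfl h2]
    push_cast
    ring

lemma aux_key_bound {X : Type*} (k : X → X → ℝ≥0∞) (H L : Set X) (m n : ℕ)
    (w : Fin (m+1) → X) (hw : ∀ j, w j ∈ H) :
    chebMbar k H L (n+1) ≤
      (1 + ((m+1 : ℕ) : ℝ≥0∞) / ((n+1 : ℕ) : ℝ≥0∞)) *
        ⨆ x ∈ L, (∑ j, k x (w j)) / ((m+1 : ℕ) : ℝ≥0∞) := by
  have hmpos : 0 < m + 1 := Nat.succ_pos m
  have hm0 : ((m+1 : ℕ) : ℝ≥0∞) ≠ 0 := Nat.cast_ne_zero.mpr (Nat.succ_ne_zero m)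
  have hmt : ((m+1 : ℕ) : ℝ≥0∞) ≠ ⊤ := ENNReal.natCast_ne_top (m+1)
  have hn0 : ((n+1 : ℕ) : ℝ≥0∞) ≠ 0 := Nat.cast_ne_zero.mpr (Nat.succ_ne_zero n)
  have hnt : ((n+1 : ℕ) : ℝ≥0∞) ≠ ⊤ := ENNReal.natCast_ne_top (n+1)
  set q := (n+1) / (m+1) with hq
  have step1 : chebMbar k H L (n+1) ≤
      ⨆ x ∈ L, (∑ j : Fin (n+1), k x (w ⟨j.val % (m+1), Nat.mod_lt _ hmpos⟩))
        / ((n+1 : ℕ) : ℝ≥0∞) := by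
    rw [chebMbar]
    exact iInf₂_le _ (fun (j : Fin (n+1)) => hw ⟨j.val % (m+1), Nat.mod_lt _ hmpos⟩)
  refine le_trans step1 (iSup₂_le fun x hx => ?_)
  set f : ℕ → ℝ≥0∞ := fun j => k x (w ⟨j % (m+1), Nat.mod_lt _ hmpos⟩) with hf
  set S := ∑ j, k x (w j) with hS
  have hT : (∑ j : Fin (n+1), k x (w ⟨j.val % (m+1), Nat.mod_lt _ hmpos⟩))
      = ∑ i ∈ Finset.range (n+1), f (i % (m+1)) := by
    rw [← Fin.sum_univ_eq_sum_range (fun i => f (i % (m+1))) (n+1)]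
    refine Finset.sum_congr rfl fun i _ => ?_
    simp only [hf, Nat.mod_mod_of_dvd _ dvd_rfl]
  have hSf : (∑ j ∈ Finset.range (m+1), f j) = S := by
    rw [← Fin.sum_univ_eq_sum_range f (m+1), hS]
    refine Finset.sum_congr rfl fun j _ => ?_
    simp only [hf, Nat.mod_eq_of_lt j.isLt, Fin.eta]
  have hle : n + 1 ≤ (q + 1) * (m+1) := by
    have h1 := Nat.div_add_mod (n+1) (m+1)
    rw [← hq] at h1
    have h2 := Nat.mod_lt (n+1) hmpos
    have h3 : (q + 1) * (m+1) = (m+1) * q + (m+1) := by ring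
    omega
  have hTS : (∑ j : Fin (n+1), k x (w ⟨j.val % (m+1), Nat.mod_lt _ hmpos⟩))
      ≤ ((q + 1 : ℕ) : ℝ≥0∞) * S := by
    rw [hT, ← hSf, ← aux_sum_mod_cycle m (q+1) f]
    exact Finset.sum_le_sum_of_subset (Finset.range_subset_range.mpr hle)
  calc (∑ j : Fin (n+1), k x (w ⟨j.val % (m+1), Nat.mod_lt _ hmpos⟩)) / ((n+1 : ℕ) : ℝ≥0∞)
      ≤ (((q + 1 : ℕ) : ℝ≥0∞) * S) / ((n+1 : ℕ) : ℝ≥0∞) := ENNReal.div_le_div_right hTS _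
    _ = (((q + 1 : ℕ) : ℝ≥0∞) * ((m+1 : ℕ) : ℝ≥0∞) / ((n+1 : ℕ) : ℝ≥0∞)) *
          (S / ((m+1 : ℕ) : ℝ≥0∞)) := by
        simp only [div_eq_mul_inv]
        rw [show ((q + 1 : ℕ) : ℝ≥0∞) * ((m+1 : ℕ) : ℝ≥0∞) * ((n+1 : ℕ) : ℝ≥0∞)⁻¹ *
              (S * ((m+1 : ℕ) : ℝ≥0∞)⁻¹)
            = ((q + 1 : ℕ) : ℝ≥0∞) * S * ((n+1 : ℕ) : ℝ≥0∞)⁻¹ *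
              (((m+1 : ℕ) : ℝ≥0∞) * ((m+1 : ℕ) : ℝ≥0∞)⁻¹) from by ring,
          ENNReal.mul_inv_cancel hm0 hmt, mul_one]
    _ ≤ ((((n+1 : ℕ) : ℝ≥0∞) + ((m+1 : ℕ) : ℝ≥0∞)) / ((n+1 : ℕ) : ℝ≥0∞)) *
          (S / ((m+1 : ℕ) : ℝ≥0∞)) := by
        refine mul_le_mul_left (ENNReal.div_le_div_right ?_ _) _
        have h1 := Nat.div_add_mod (n+1) (m+1)
        rw [← hq] at h1
        have h3 : (q + 1) * (m+1) = (m+1) * q + (m+1) := by ring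
        have : (q + 1) * (m+1) ≤ (n+1) + (m+1) := by omega
        exact_mod_cast this
    _ = (1 + ((m+1 : ℕ) : ℝ≥0∞) / ((n+1 : ℕ) : ℝ≥0∞)) * (S / ((m+1 : ℕ) : ℝ≥0∞)) := by
        rw [ENNReal.add_div, ENNReal.div_self hn0 hnt]
    _ ≤ (1 + ((m+1 : ℕ) : ℝ≥0∞) / ((n+1 : ℕ) : ℝ≥0∞)) *
          ⨆ x ∈ L, (∑ j, k x (w j)) / ((m+1 : ℕ) : ℝ≥0∞) := by
        refine mul_le_mul_right ?_ _
        exact le_iSup₂ (f := fun x (_ : x ∈ L) => (∑ j, k x (w j)) / ((m+1 : ℕ) : ℝ≥0∞)) x hx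


/-- The sequence `M̄_n(H,L)` (`n ≥ 1`) of dual Chebyshev constants converges in
`[0,∞]` to its infimum `inf_{n ≥ 1} M̄_n(H,L)`. -/
theorem chebMbar_tendsto_iInf
    {X : Type*} [TopologicalSpace X] [LocallyCompactSpace X] [T2Space X]
    (k : X → X → ℝ≥0∞)
    (hk : LowerSemicontinuous fun p : X × X => k p.1 p.2)
    (hksymm : ∀ x y, k x y = k y x)
    (H L : Set X) :
    Tendsto (fun n : ℕ => chebMbar k H L (n + 1)) atTop
      (nhds (⨅ n : ℕ, chebMbar k H L (n + 1))) := by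
  refine tendsto_of_le_liminf_of_limsup_le ?_ ?_
  · exact le_liminf_of_le (by isBoundedDefault)
      (Eventually.of_forall fun n => iInf_le _ n)
  · refine le_iInf fun m => ?_
    rw [chebMbar]
    refine le_iInf₂ fun w hw => ?_
    set B := ⨆ x ∈ L, (∑ j, k x (w j)) / ((m+1 : ℕ) : ℝ≥0∞) with hB
    by_cases hBtop : B = ⊤
    · simp [hBtop]
    have hmt : ((m+1 : ℕ) : ℝ≥0∞) ≠ ⊤ := ENNReal.natCast_ne_top (m+1)
    have key : ∀ n : ℕ, chebMbar k H L (n+1)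
        ≤ B + ((m+1:ℕ):ℝ≥0∞)/((n+1:ℕ):ℝ≥0∞) * B := by
      intro n
      refine (aux_key_bound k H L m n w hw).trans_eq ?_
      rw [add_mul, one_mul]
    have h0 : Tendsto (fun n : ℕ => ((m+1:ℕ):ℝ≥0∞)/((n+1:ℕ):ℝ≥0∞)) atTop (nhds 0) := by
      have hinv : Tendsto (fun n : ℕ => (((n+1:ℕ)):ℝ≥0∞)⁻¹) atTop (nhds 0) := by
        have := ENNReal.tendsto_inv_nat_nhds_zero.comp (tendsto_add_atTop_nat 1)
        simpa [Function.comp_def] using this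
      simpa [div_eq_mul_inv] using ENNReal.Tendsto.const_mul hinv (Or.inr hmt)
    have h1 : Tendsto (fun n : ℕ => ((m+1:ℕ):ℝ≥0∞)/((n+1:ℕ):ℝ≥0∞) * B) atTop (nhds 0) := by
      simpa using ENNReal.Tendsto.mul_const h0 (Or.inr hBtop)
    have hlim : Tendsto (fun n : ℕ => B + ((m+1:ℕ):ℝ≥0∞)/((n+1:ℕ):ℝ≥0∞) * B)
        atTop (nhds B) := by
      simpa using tendsto_const_nhds.add h1
    calc limsup (fun n : ℕ => chebMbar k H L (n+1)) atTop
        ≤ limsup (fun n : ℕ => B + ((m+1:ℕ):ℝ≥0∞)/((n+1:ℕ):ℝ≥0∞) * B) atTop :=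
          limsup_le_limsup (Eventually.of_forall key)
      _ = B := hlim.limsup_eq
end

section
/- Let X be a locally compact Hausdorff space and k : X × X → [0,∞] a lower semicontinuous symmetric kernel. For any H, L ⊆ X, the dual Chebyshev constant coincides with the restricted quasi-uniform energy and the Chebyshev constant coincides with the restricted dual energy: inf_{n≥1} M̄_n(H,L) = q^#(H,L) and sup_{n≥1} M_n(H,L) = q̲^#(H,L). -/
open MeasureTheory Set ENNReal Filter

variable {X : Type*}

/-!
Uniform measures on `n`-tuples of `H` are sharp measures, which gives `q^# ≤ M̄_n` and
`M_n ≤ q̲^#`. Conversely, a sharp measure `∑ α_j δ_{w_j}` is compared with the uniform measure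
on the tuple repeating `w_j` exactly `⌈N α_j⌉` times. Since `k` may take the value `∞`, the
two potentials have to be compared multiplicatively: rounding up keeps zero weights at zero
and, for large `N`, puts every other empirical weight within a factor `c < 1` of `α_j`.
-/

open NNReal

lemma NNReal.eventually_mul_add_le {c : ℝ≥0} (hc : c < 1) (d : ℝ≥0) :
    ∀ᶠ x in atTop, c * (x + d) ≤ x := by
  filter_upwards [eventually_ge_atTop (c * d / (1 - c))] with x hx
  rw [div_le_iff₀ (tsub_pos_of_lt hc)] at hx
  calc c * (x + d) = c * x + c * d := mul_add _ _ _
    _ ≤ x * c + x * (1 - c) := by rw [mul_comm c x]; gcongr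
    _ = x := by rw [← mul_add, add_tsub_cancel_of_le hc.le, mul_one]

lemma NNReal.exists_nat_mul_le_and_mul_le {ι : Type*} [Fintype ι] {a : ι → ℝ≥0}
    (ha : ∑ i, a i = 1) {c : ℝ≥0} (hc : c < 1) :
    ∃ p : ι → ℕ, ∑ i, p i ≠ 0 ∧ ∀ i,
      c * p i ≤ a i * ((∑ j, p j : ℕ) : ℝ≥0) ∧ c * (a i * ((∑ j, p j : ℕ) : ℝ≥0)) ≤ p i := by
  have hceil : ∀ i, ∀ᶠ N : ℕ in atTop, c * ⌈(N : ℝ≥0) * a i⌉₊ ≤ N * a i := by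
    intro i
    rcases eq_or_ne (a i) 0 with h | h
    · simp [h]
    filter_upwards [(tendsto_natCast_atTop_atTop.atTop_mul_const (pos_iff_ne_zero.2 h)).eventually
      (eventually_mul_add_le hc 1)] with N hN
    exact (mul_le_mul_right (Nat.ceil_lt_add_one zero_le).le c).trans hN
  obtain ⟨N, hpN, hN, hN1⟩ := ((eventually_all.2 hceil).and
    ((tendsto_natCast_atTop_atTop.eventually (eventually_mul_add_le hc (Fintype.card ι))).and
      (eventually_ge_atTop 1))).exists
  set p : ι → ℕ := fun i => ⌈(N : ℝ≥0) * a i⌉₊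
  have hNM : (N : ℝ≥0) ≤ ((∑ j, p j : ℕ) : ℝ≥0) := by
    calc (N : ℝ≥0) = ∑ j, N * a j := by rw [← Finset.mul_sum, ha, mul_one]
      _ ≤ ∑ j, (p j : ℝ≥0) := Finset.sum_le_sum fun j _ => Nat.le_ceil _
      _ = _ := by push_cast; rfl
  have hMN : ((∑ j, p j : ℕ) : ℝ≥0) ≤ N + Fintype.card ι := by
    calc ((∑ j, p j : ℕ) : ℝ≥0) = ∑ j, (p j : ℝ≥0) := by push_cast; rfl
      _ ≤ ∑ j, ((N : ℝ≥0) * a j + 1) :=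
        Finset.sum_le_sum fun j _ => (Nat.ceil_lt_add_one zero_le).le
      _ = N + Fintype.card ι := by
        rw [Finset.sum_add_distrib, ← Finset.mul_sum, ha, mul_one, Finset.sum_const,
          Finset.card_univ, nsmul_one]
  refine ⟨p, ?_, fun i => ⟨?_, ?_⟩⟩
  · have : (1 : ℝ≥0) ≤ ((∑ j, p j : ℕ) : ℝ≥0) := le_trans (by exact_mod_cast hN1) hNM
    exact_mod_cast (zero_lt_one.trans_le this).ne'
  · calc c * p i ≤ N * a i := hpN i
      _ ≤ a i * ((∑ j, p j : ℕ) : ℝ≥0) := by rw [mul_comm]; gcongr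
  · calc c * (a i * ((∑ j, p j : ℕ) : ℝ≥0)) ≤ a i * (c * (N + Fintype.card ι)) := by
          rw [mul_left_comm]; gcongr
      _ ≤ a i * N := by gcongr
      _ ≤ p i := by rw [mul_comm]; exact Nat.le_ceil _

lemma ENNReal.exists_nat_div_sum_approx {ι : Type*} [Fintype ι] {α : ι → ℝ≥0∞}
    (hα : ∑ i, α i = 1) {c : ℝ≥0∞} (hc : c < 1) :
    ∃ p : ι → ℕ, ∑ i, p i ≠ 0 ∧ ∀ i,
      c * (p i / ((∑ j, p j : ℕ) : ℝ≥0∞)) ≤ α i ∧ c * α i ≤ p i / ((∑ j, p j : ℕ) : ℝ≥0∞) := by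
  have hα_top : ∀ i, α i ≠ ∞ := fun i =>
    ne_top_of_le_ne_top one_ne_top (hα ▸ Finset.single_le_sum (fun _ _ => zero_le)
      (Finset.mem_univ i))
  lift α to ι → ℝ≥0 using hα_top
  lift c to ℝ≥0 using hc.ne_top
  dsimp only at hα ⊢
  obtain ⟨p, hM, hp⟩ := NNReal.exists_nat_mul_le_and_mul_le (a := α) (by exact_mod_cast hα)
    (by exact_mod_cast hc)
  have hM' : ((∑ j, p j : ℕ) : ℝ≥0∞) ≠ 0 := by exact_mod_cast hM
  refine ⟨p, hM, fun i => ⟨?_, ?_⟩⟩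
  · rw [← mul_div_assoc, ENNReal.div_le_iff hM' (natCast_ne_top _)]
    exact_mod_cast (hp i).1
  · rw [ENNReal.le_div_iff_mul_le (Or.inl hM') (Or.inl (natCast_ne_top _)), mul_assoc]
    exact_mod_cast (hp i).2

lemma sum_comp_fst_finSigmaFinEquiv_symm {M : Type*} [AddCommMonoid M] {n : ℕ}
    (p : Fin n → ℕ) (f : Fin n → M) :
    ∑ t, f ((finSigmaFinEquiv (n := p)).symm t).1 = ∑ j, p j • f j := by
  rw [(finSigmaFinEquiv (n := p)).symm.sum_comp (fun s => f s.1), Fintype.sum_sigma]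
  simp

lemma exists_fin_tuple_mul_le_weighted_sum {n : ℕ} {α : Fin n → ℝ≥0∞} (hα : ∑ j, α j = 1)
    {c : ℝ≥0∞} (hc : c < 1) :
    ∃ (m : ℕ) (σ : Fin m → Fin n), m ≠ 0 ∧ ∀ f : Fin n → ℝ≥0∞,
      c * ((∑ i, f (σ i)) / m) ≤ ∑ j, α j * f j ∧
        c * ∑ j, α j * f j ≤ (∑ i, f (σ i)) / m := by
  obtain ⟨p, hM, hp⟩ := ENNReal.exists_nat_div_sum_approx hα hc
  refine ⟨∑ j, p j, fun t => ((finSigmaFinEquiv (n := p)).symm t).1, hM, fun f => ?_⟩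
  have hmean : (∑ t, f ((finSigmaFinEquiv (n := p)).symm t).1) / ((∑ j, p j : ℕ) : ℝ≥0∞)
      = ∑ j, p j / ((∑ j, p j : ℕ) : ℝ≥0∞) * f j := by
    rw [sum_comp_fst_finSigmaFinEquiv_symm p f, div_eq_mul_inv, Finset.sum_mul]
    refine Finset.sum_congr rfl fun j _ => ?_
    rw [nsmul_eq_mul, div_eq_mul_inv, mul_right_comm]
  rw [hmean, Finset.mul_sum, Finset.mul_sum]
  constructor <;> refine Finset.sum_le_sum fun j _ => ?_ <;> rw [← mul_assoc]
  · exact mul_le_mul_left (hp j).1 _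
  · exact mul_le_mul_left (hp j).2 _

section Chebyshev

variable [MeasurableSpace X] {k : X → X → ℝ≥0∞} {H L : Set X}

lemma potential_sum_smul_dirac [MeasurableSingletonClass X] {ι : Type*} [Fintype ι]
    (w : ι → X) (α : ι → ℝ≥0∞) (x : X) :
    potential k (∑ j, α j • Measure.dirac (w j)) x = ∑ j, α j * k x (w j) := by
  simp [potential, lintegral_smul_measure, lintegral_dirac]

lemma potential_sum_inv_smul_dirac [MeasurableSingletonClass X] {n : ℕ} (w : Fin n → X)
    (x : X) :
    potential k (∑ j, (n : ℝ≥0∞)⁻¹ • Measure.dirac (w j)) x = (∑ j, k x (w j)) / n := by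
  rw [potential_sum_smul_dirac, ← Finset.mul_sum, ENNReal.div_eq_inv_mul]

lemma sum_inv_smul_dirac_mem_M1sharp {n : ℕ} (hn : n ≠ 0) {w : Fin n → X}
    (hw : ∀ j, w j ∈ H) : ∑ j, (n : ℝ≥0∞)⁻¹ • Measure.dirac (w j) ∈ M1sharp H := by
  refine ⟨n, w, _, hw, ?_, rfl⟩
  simp [ENNReal.mul_inv_cancel (Nat.cast_ne_zero.2 hn) (natCast_ne_top n)]

lemma qEnergySharp_le_chebMbar [MeasurableSingletonClass X] {n : ℕ} (hn : n ≠ 0) :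
    qEnergySharp k H L ≤ chebMbar k H L n :=
  le_iInf₂ fun w hw => iInf₂_le_of_le _ (sum_inv_smul_dirac_mem_M1sharp hn hw) <| by
    simp only [potential_sum_inv_smul_dirac, le_rfl]

lemma chebM_le_qEnergyLowSharp [MeasurableSingletonClass X] {n : ℕ} (hn : n ≠ 0) :
    chebM k H L n ≤ qEnergyLowSharp k H L :=
  iSup₂_le fun w hw => le_iSup₂_of_le _ (sum_inv_smul_dirac_mem_M1sharp hn hw) <| by
    simp only [potential_sum_inv_smul_dirac, le_rfl]

lemma iInf_chebMbar_succ_le_of_mem_M1sharp [MeasurableSingletonClass X] {μ : Measure X}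
    (hμ : μ ∈ M1sharp H) : ⨅ n : ℕ, chebMbar k H L (n + 1) ≤ ⨆ x ∈ L, potential k μ x := by
  obtain ⟨n, w, α, hw, hα, rfl⟩ := hμ
  refine ENNReal.le_of_forall_lt_one_mul_le fun c hc => ?_
  obtain ⟨m, σ, hm, happrox⟩ := exists_fin_tuple_mul_le_weighted_sum hα hc
  obtain ⟨m, rfl⟩ := Nat.exists_eq_succ_of_ne_zero hm
  calc c * ⨅ n : ℕ, chebMbar k H L (n + 1)
      ≤ c * ⨆ x ∈ L, (∑ i, k x (w (σ i))) / (m + 1 : ℕ) := by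
        gcongr
        exact iInf_le_of_le m (iInf₂_le (w ∘ σ) fun i => hw (σ i))
    _ = ⨆ x ∈ L, c * ((∑ i, k x (w (σ i))) / (m + 1 : ℕ)) := by simp only [ENNReal.mul_iSup]
    _ ≤ ⨆ x ∈ L, potential k (∑ j, α j • Measure.dirac (w j)) x := by
        gcongr with x
        rw [potential_sum_smul_dirac]
        exact (happrox fun j => k x (w j)).1

lemma le_iSup_chebM_succ_of_mem_M1sharp [MeasurableSingletonClass X] {μ : Measure X}
    (hμ : μ ∈ M1sharp H) : ⨅ x ∈ L, potential k μ x ≤ ⨆ n : ℕ, chebM k H L (n + 1) := by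
  obtain ⟨n, w, α, hw, hα, rfl⟩ := hμ
  refine ENNReal.le_of_forall_lt_one_mul_le fun c hc => ?_
  obtain ⟨m, σ, hm, happrox⟩ := exists_fin_tuple_mul_le_weighted_sum hα hc
  obtain ⟨m, rfl⟩ := Nat.exists_eq_succ_of_ne_zero hm
  calc c * ⨅ x ∈ L, potential k (∑ j, α j • Measure.dirac (w j)) x
      ≤ ⨅ x ∈ L, (∑ i, k x (w (σ i))) / (m + 1 : ℕ) := by
        refine le_iInf₂ fun x hx => (mul_le_mul_right (iInf₂_le x hx) c).trans ?_
        rw [potential_sum_smul_dirac]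
        exact (happrox fun j => k x (w j)).2
    _ ≤ chebM k H L (m + 1) := le_iSup₂_of_le (w ∘ σ) (fun i => hw (σ i)) le_rfl
    _ ≤ ⨆ n : ℕ, chebM k H L (n + 1) := le_iSup (fun n => chebM k H L (n + 1)) m

end Chebyshev

theorem cheb_eq_sharpEnergies_general
    {X : Type*} [TopologicalSpace X] [T2Space X]
    [MeasurableSpace X] [BorelSpace X]
    (k : X → X → ℝ≥0∞)
    (H L : Set X) :
    (⨅ n : ℕ, chebMbar k H L (n + 1)) = qEnergySharp k H L ∧
    (⨆ n : ℕ, chebM k H L (n + 1)) = qEnergyLowSharp k H L :=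
  ⟨le_antisymm (le_iInf₂ fun _ hμ => iInf_chebMbar_succ_le_of_mem_M1sharp hμ)
      (le_iInf fun n => qEnergySharp_le_chebMbar n.succ_ne_zero),
    le_antisymm (iSup_le fun n => chebM_le_qEnergyLowSharp n.succ_ne_zero)
      (iSup₂_le fun _ hμ => le_iSup_chebM_succ_of_mem_M1sharp hμ)⟩

/-- `inf_{n ≥ 1} M̄_n(H,L) = q^#(H,L)` and `sup_{n ≥ 1} M_n(H,L) = q̲^#(H,L)`. -/
theorem cheb_eq_sharpEnergies
    {X : Type*} [TopologicalSpace X] [LocallyCompactSpace X] [T2Space X]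
    [MeasurableSpace X] [BorelSpace X]
    (k : X → X → ℝ≥0∞)
    (hk : LowerSemicontinuous fun p : X × X => k p.1 p.2)
    (hksymm : ∀ x y, k x y = k y x)
    (H L : Set X) :
    (⨅ n : ℕ, chebMbar k H L (n + 1)) = qEnergySharp k H L ∧
    (⨆ n : ℕ, chebM k H L (n + 1)) = qEnergyLowSharp k H L :=
  cheb_eq_sharpEnergies_general k H L
end

section
/- (Minimax Theorem) Let U be a Hausdorff real topological vector space, A ⊆ U a nonempty compact convex set, V a real vector space, B ⊆ V a nonempty convex set, and let f : A × B → (−∞,+∞] (extended reals never equal to −∞) satisfy: (i) for each fixed y ∈ B, the map x ↦ f(x,y) is lower semicontinuous on A; (ii) for each fixed y ∈ B, x ↦ f(x,y) is convex, i.e. f(t x₁ + (1−t) x₂, y) ≤ t f(x₁,y) + (1−t) f(x₂,y) for all x₁,x₂ ∈ A and t ∈ (0,1); (iii) for each fixed x ∈ A, y ↦ f(x,y) is concave, i.e. f(x, t y₁ + (1−t) y₂) ≥ t f(x,y₁) + (1−t) f(x,y₂) for all y₁,y₂ ∈ B and t ∈ (0,1). Then sup_{y∈B} inf_{x∈A}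 f(x,y) = inf_{x∈A} sup_{y∈B} f(x,y). -/
/-!
Fix a real `d` with `⨆ y ∈ B, ⨅ x ∈ A, f x y < d`. Since the sublevel sets `{x ∈ A | f x y ≤ d}`
are relatively closed in the compact set `A`, it suffices to find, for every finite `F ⊆ B`, a
point `x ∈ A` with `f x y < d` for all `y ∈ F`. This goes by induction on `#F`: to add `y₀` to
`F`, apply the induction hypothesis to the points `t • y + (1 - t) • y₀` (`y ∈ F`); concavity in
`y` then makes `t • max_{y ∈ F} f x y + (1 - t) • f x y₀` small for every `t ∈ (0, 1)`, at some
`x` depending on `t`. A two-function lemma turns this into one `x` at which both terms are small: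
separate, in `ℝ²`, the convex set `{(p, q) | ∃ x, g x ≤ p ∧ h x ≤ q}` from an open square, and
use the lower bound of `f` (lower semicontinuity on a compact set) to move the separating weight
into the open interval `(0, 1)`.
-/

open Set Filter Topology

theorem nonneg_of_forall_le_add_nat_mul {a b c : ℝ} (h : ∀ n : ℕ, c ≤ b + n * a) : 0 ≤ a := by
  by_contra! ha
  obtain ⟨n, hn⟩ := exists_nat_gt ((b - c) / -a)
  rw [div_lt_iff₀ (neg_pos.2 ha)] at hn
  linarith [h n]

/-- Replacing `t₀` by `(1 - l) * t₀ + l / 2` lowers the bound only to `(1 - l) * e + l * m`,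
which stays above `c` for small `l > 0`. -/
theorem exists_mem_Ioo_le_convexComb {α : Type*} {s : Set α} {G H : α → ℝ} {m c e t₀ : ℝ}
    (hGm : ∀ x ∈ s, m ≤ G x) (hHm : ∀ x ∈ s, m ≤ H x) (hce : c < e)
    (ht₀ : t₀ ∈ Icc (0 : ℝ) 1) (he : ∀ x ∈ s, e ≤ t₀ * G x + (1 - t₀) * H x) :
    ∃ t ∈ Ioo (0 : ℝ) 1, ∀ x ∈ s, c ≤ t * G x + (1 - t) * H x := by
  have hmix : Tendsto (fun l : ℝ => (1 - l) * e + l * m) (𝓝[>] 0) (𝓝 e) :=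
    ((by fun_prop : Continuous fun l : ℝ => (1 - l) * e + l * m).tendsto' 0 e (by simp)).mono_left
      nhdsWithin_le_nhds
  obtain ⟨l, ⟨hl₀, hl₁⟩, hlc⟩ :=
    (Eventually.and (Ioo_mem_nhdsGT one_pos) (hmix.eventually (lt_mem_nhds hce))).exists
  obtain ⟨ht₀₀, ht₀₁⟩ := ht₀
  refine ⟨(1 - l) * t₀ + l / 2, ⟨by nlinarith, by nlinarith⟩, fun x hx => ?_⟩
  have hGx := hGm x hx
  have hHx := hHm x hx
  have hex := he x hx
  calc c ≤ (1 - l) * e + l * m := hlc.le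
    _ ≤ (1 - l) * (t₀ * G x + (1 - t₀) * H x) + l * ((G x + H x) / 2) := by
      gcongr
      linarith
    _ = ((1 - l) * t₀ + l / 2) * G x + (1 - ((1 - l) * t₀ + l / 2)) * H x := by ring

section ConvexCombination

variable {E : Type*} [AddCommGroup E] [Module ℝ E] {s : Set E} {G H : E → ℝ}

theorem ConvexOn.convex_setOf_exists_le_and_le (hG : ConvexOn ℝ s G) (hH : ConvexOn ℝ s H) :
    Convex ℝ {p : ℝ × ℝ | ∃ x ∈ s, G x ≤ p.1 ∧ H x ≤ p.2} := by
  rintro p ⟨x₁, hx₁, hG₁, hH₁⟩ q ⟨x₂, hx₂, hG₂, hH₂⟩ a b ha hb hab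
  refine ⟨a • x₁ + b • x₂, hG.1 hx₁ hx₂ ha hb hab, ?_, ?_⟩
  · calc G (a • x₁ + b • x₂) ≤ a * G x₁ + b * G x₂ := hG.2 hx₁ hx₂ ha hb hab
      _ ≤ (a • p + b • q).1 := by simp only [Prod.fst_add, Prod.smul_fst, smul_eq_mul]; gcongr
  · calc H (a • x₁ + b • x₂) ≤ a * H x₁ + b * H x₂ := hH.2 hx₁ hx₂ ha hb hab
      _ ≤ (a • p + b • q).2 := by simp only [Prod.snd_add, Prod.smul_snd, smul_eq_mul]; gcongr

/-- Separating the open square `Iio d ×ˢ Iio d` from the upward closure of `{(G x, H x) | x ∈ s}`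
yields the weight `t`. -/
theorem exists_mem_Icc_le_convexComb (hs : s.Nonempty) (hG : ConvexOn ℝ s G)
    (hH : ConvexOn ℝ s H) {e d : ℝ} (hed : e < d) (hd : ∀ x ∈ s, G x < d → d ≤ H x) :
    ∃ t ∈ Icc (0 : ℝ) 1, ∀ x ∈ s, e ≤ t * G x + (1 - t) * H x := by
  have hdisj : Disjoint (Iio d ×ˢ Iio d) {p : ℝ × ℝ | ∃ x ∈ s, G x ≤ p.1 ∧ H x ≤ p.2} := by
    rw [Set.disjoint_left]
    rintro p ⟨hp₁, hp₂⟩ ⟨x, hx, hGx, hHx⟩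
    exact (hd x hx (hGx.trans_lt hp₁)).not_gt (hHx.trans_lt hp₂)
  obtain ⟨φ, u, hlt, hle⟩ := geometric_hahn_banach_open ((convex_Iio d).prod (convex_Iio d))
    (isOpen_Iio.prod isOpen_Iio) (hG.convex_setOf_exists_le_and_le hH) hdisj
  set a := φ (1, 0)
  set b := φ (0, 1)
  have hφ (p : ℝ × ℝ) : φ p = p.1 * a + p.2 * b := by
    conv_lhs => rw [show p = p.1 • ((1 : ℝ), (0 : ℝ)) + p.2 • ((0 : ℝ), (1 : ℝ)) by ext <;> simp]
    rw [map_add, map_smul, map_smul, smul_eq_mul, smul_eq_mul]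
  have hbound (x : E) (hx : x ∈ s) (δ₁ δ₂ : ℝ) (h₁ : 0 ≤ δ₁) (h₂ : 0 ≤ δ₂) :
      u ≤ (G x + δ₁) * a + (H x + δ₂) * b :=
    hφ (G x + δ₁, H x + δ₂) ▸ hle _ ⟨x, hx, by simpa using h₁, by simpa using h₂⟩
  have he : e * a + e * b < u := hφ (e, e) ▸ hlt _ ⟨hed, hed⟩
  obtain ⟨x₀, hx₀⟩ := hs
  have ha : 0 ≤ a := nonneg_of_forall_le_add_nat_mul (b := G x₀ * a + H x₀ * b) (c := u) fun n => by
    linarith [hbound x₀ hx₀ n 0 n.cast_nonneg le_rfl]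
  have hb : 0 ≤ b := nonneg_of_forall_le_add_nat_mul (b := G x₀ * a + H x₀ * b) (c := u) fun n => by
    linarith [hbound x₀ hx₀ 0 n le_rfl n.cast_nonneg]
  have hab : 0 < a + b := by
    by_contra! hab
    have h₀ := hbound x₀ hx₀ 0 0 le_rfl le_rfl
    rw [show a = 0 by linarith, show b = 0 by linarith] at he h₀
    linarith
  refine ⟨a / (a + b), ⟨by positivity, (div_le_one hab).2 (by linarith)⟩, fun x hx => ?_⟩
  have hxu := hbound x hx 0 0 le_rfl le_rfl
  rw [div_mul_eq_mul_div, one_sub_div hab.ne', div_mul_eq_mul_div, ← add_div,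
    le_div_iff₀ hab]
  nlinarith

theorem ConvexOn.exists_lt_and_lt_of_forall_convexComb_lt (hG : ConvexOn ℝ s G)
    (hH : ConvexOn ℝ s H) {m : ℝ} (hGm : ∀ x ∈ s, m ≤ G x) (hHm : ∀ x ∈ s, m ≤ H x)
    {c d : ℝ} (hcd : c < d)
    (hcomb : ∀ t ∈ Ioo (0 : ℝ) 1, ∃ x ∈ s, t * G x + (1 - t) * H x < c) :
    ∃ x ∈ s, G x < d ∧ H x < d := by
  by_contra! hd
  obtain ⟨x₀, hx₀, -⟩ := hcomb (1 / 2) ⟨by norm_num, by norm_num⟩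
  obtain ⟨t₀, ht₀, he⟩ := exists_mem_Icc_le_convexComb ⟨x₀, hx₀⟩ hG hH (e := (c + d) / 2)
    (by linarith) hd
  obtain ⟨t, ht, hc⟩ := exists_mem_Ioo_le_convexComb hGm hHm (by linarith) ht₀ he
    (c := c) (e := (c + d) / 2)
  obtain ⟨x, hx, hlt⟩ := hcomb t ht
  exact (hc x hx).not_gt hlt

end ConvexCombination

section ERealConvexity

variable {E : Type*} [AddCommGroup E] [Module ℝ E]

/-- `ConvexOn` needs an ordered `ℝ`-module as codomain, which `EReal` is not. -/
def EConvexOn (s : Set E) (g : E → EReal) : Prop :=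
  ∀ x₁ ∈ s, ∀ x₂ ∈ s, ∀ t : ℝ, 0 < t → t < 1 →
    g (t • x₁ + (1 - t) • x₂) ≤ (t : EReal) * g x₁ + ((1 - t : ℝ) : EReal) * g x₂

def EConcaveOn (s : Set E) (g : E → EReal) : Prop :=
  ∀ y₁ ∈ s, ∀ y₂ ∈ s, ∀ t : ℝ, 0 < t → t < 1 →
    (t : EReal) * g y₁ + ((1 - t : ℝ) : EReal) * g y₂ ≤ g (t • y₁ + (1 - t) • y₂)

variable {s : Set E} {g h : E → EReal}

theorem EConvexOn.iSup {ι : Sort*} {g : ι → E → EReal} (hg : ∀ i, EConvexOn s (g i)) :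
    EConvexOn s fun x => ⨆ i, g i x := fun x₁ hx₁ x₂ hx₂ t ht₀ ht₁ =>
  iSup_le fun i => (hg i x₁ hx₁ x₂ hx₂ t ht₀ ht₁).trans <| by
    gcongr <;> exact le_iSup (fun i => g i _) i

theorem EConvexOn.le_add {x₁ x₂ : E} (hg : EConvexOn s g) (hx₁ : x₁ ∈ s) (hx₂ : x₂ ∈ s)
    {a b : ℝ} (ha : 0 < a) (hb : 0 < b) (hab : a + b = 1) :
    g (a • x₁ + b • x₂) ≤ (a : EReal) * g x₁ + (b : EReal) * g x₂ := by
  obtain rfl := eq_sub_of_add_eq' hab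
  exact hg x₁ hx₁ x₂ hx₂ a ha (by linarith)

theorem EConvexOn.convex_setOf_ne_top (hs : Convex ℝ s) (hg : EConvexOn s g) :
    Convex ℝ {x ∈ s | g x ≠ ⊤} := by
  refine convex_iff_forall_pos.2 fun x₁ hx₁ x₂ hx₂ a b ha hb hab => ?_
  refine ⟨hs hx₁.1 hx₂.1 ha.le hb.le hab,
    ne_top_of_le_ne_top ?_ (hg.le_add hx₁.1 hx₂.1 ha hb hab)⟩
  exact (EReal.add_lt_top (by simp [EReal.mul_ne_top, hx₁.2, ha.le])
    (by simp [EReal.mul_ne_top, hx₂.2, hb.le])).ne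

theorem EConvexOn.convexOn_toReal (hs : Convex ℝ s) (hg : EConvexOn s g)
    (hbot : ∀ x ∈ s, g x ≠ ⊥) : ConvexOn ℝ {x ∈ s | g x ≠ ⊤} fun x => (g x).toReal := by
  refine convexOn_iff_forall_pos.2
    ⟨hg.convex_setOf_ne_top hs, fun x₁ hx₁ x₂ hx₂ a b ha hb hab => ?_⟩
  have hz := hg.convex_setOf_ne_top hs hx₁ hx₂ ha.le hb.le hab
  have key := hg.le_add hx₁.1 hx₂.1 ha hb hab
  rw [← EReal.coe_toReal hx₁.2 (hbot _ hx₁.1), ← EReal.coe_toReal hx₂.2 (hbot _ hx₂.1),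
    ← EReal.coe_toReal hz.2 (hbot _ hz.1)] at key
  exact_mod_cast key

theorem EReal.ne_top_of_coe_mul_add_coe_mul_lt {t r : ℝ} (ht : 0 < t) (hr : 0 ≤ r) {a b : EReal}
    (hb : b ≠ ⊥) {c : EReal} (h : (t : EReal) * a + (r : EReal) * b < c) : a ≠ ⊤ := by
  rintro rfl
  rw [EReal.coe_mul_top_of_pos ht, EReal.top_add_of_ne_bot (by simp [EReal.mul_ne_bot, hb, hr])]
    at h
  exact not_top_lt h

theorem EConvexOn.exists_lt_and_lt_of_forall_convexComb_lt (hs : Convex ℝ s)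
    (hg : EConvexOn s g) (hh : EConvexOn s h) {m : ℝ}
    (hgm : ∀ x ∈ s, (m : EReal) ≤ g x) (hhm : ∀ x ∈ s, (m : EReal) ≤ h x) {c d : ℝ} (hcd : c < d)
    (hcomb : ∀ t ∈ Ioo (0 : ℝ) 1, ∃ x ∈ s, (t : EReal) * g x + ((1 - t : ℝ) : EReal) * h x < c) :
    ∃ x ∈ s, g x < d ∧ h x < d := by
  have hgbot (x) (hx : x ∈ s) : g x ≠ ⊥ := ne_bot_of_le_ne_bot (EReal.coe_ne_bot m) (hgm x hx)
  have hhbot (x) (hx : x ∈ s) : h x ≠ ⊥ := ne_bot_of_le_ne_bot (EReal.coe_ne_bot m) (hhm x hx)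
  set s' := {x ∈ s | g x ≠ ⊤} ∩ {x ∈ s | h x ≠ ⊤}
  have hs' : Convex ℝ s' := (hg.convex_setOf_ne_top hs).inter (hh.convex_setOf_ne_top hs)
  have hg' (x) (hx : x ∈ s') : ((g x).toReal : EReal) = g x :=
    EReal.coe_toReal hx.1.2 (hgbot x hx.1.1)
  have hh' (x) (hx : x ∈ s') : ((h x).toReal : EReal) = h x :=
    EReal.coe_toReal hx.2.2 (hhbot x hx.1.1)
  have hcomb' (t : ℝ) (ht : t ∈ Ioo (0 : ℝ) 1) :
      ∃ x ∈ s', t * (g x).toReal + (1 - t) * (h x).toReal < c := by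
    obtain ⟨x, hx, hlt⟩ := hcomb t ht
    have hgx : g x ≠ ⊤ :=
      EReal.ne_top_of_coe_mul_add_coe_mul_lt ht.1 (by linarith [ht.2]) (hhbot x hx) hlt
    have hhx : h x ≠ ⊤ := EReal.ne_top_of_coe_mul_add_coe_mul_lt (t := 1 - t) (r := t)
      (by linarith [ht.2]) ht.1.le (hgbot x hx) (by rwa [add_comm] at hlt)
    have hx' : x ∈ s' := ⟨⟨hx, hgx⟩, hx, hhx⟩
    refine ⟨x, hx', ?_⟩
    rw [← hg' x hx', ← hh' x hx'] at hlt
    exact_mod_cast hlt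
  obtain ⟨x, hx, hgx, hhx⟩ := ((hg.convexOn_toReal hs hgbot).subset inter_subset_left hs')
    |>.exists_lt_and_lt_of_forall_convexComb_lt
    ((hh.convexOn_toReal hs hhbot).subset inter_subset_right hs')
    (fun x hx => by exact_mod_cast (hg' x hx).symm ▸ hgm x hx.1.1)
    (fun x hx => by exact_mod_cast (hh' x hx).symm ▸ hhm x hx.1.1) hcd hcomb'
  exact ⟨x, hx.1.1, hg' x hx ▸ EReal.coe_lt_coe_iff.2 hgx, hh' x hx ▸ EReal.coe_lt_coe_iff.2 hhx⟩

end ERealConvexity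

theorem LowerSemicontinuousOn.exists_coe_le_of_ne_bot {X : Type*} [TopologicalSpace X]
    {K : Set X} {g : X → EReal} (hg : LowerSemicontinuousOn g K) (hK : IsCompact K)
    (hbot : ∀ x ∈ K, g x ≠ ⊥) : ∃ m : ℝ, ∀ x ∈ K, (m : EReal) ≤ g x := by
  obtain rfl | hne := K.eq_empty_or_nonempty
  · simp
  obtain ⟨x₀, hx₀, hmin⟩ := hg.exists_isMinOn hne hK
  obtain ⟨m, -, hm⟩ := EReal.exists_between_coe_real (bot_lt_iff_ne_bot.2 (hbot x₀ hx₀))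
  exact ⟨m, fun x hx => hm.le.trans (hmin hx)⟩

section FiniteIntersection

variable {U V : Type*} [AddCommGroup U] [Module ℝ U] [AddCommGroup V] [Module ℝ V]
  {A : Set U} {B : Set V} {f : U → V → EReal}

theorem exists_lt_and_forall_lt_of_forall_convexComb_lt (hA : Convex ℝ A)
    (hconvex : ∀ y ∈ B, EConvexOn A (f · y)) (hconcave : ∀ x ∈ A, EConcaveOn B (f x))
    (hbdd : ∀ y ∈ B, ∃ m : ℝ, ∀ x ∈ A, (m : EReal) ≤ f x y)
    {F : Finset V} (hF : F.Nonempty) (hFB : ↑F ⊆ B) {y₀ : V} (hy₀ : y₀ ∈ B) {c₀ c : ℝ}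
    (hc : c₀ < c)
    (hcomb : ∀ t ∈ Ioo (0 : ℝ) 1, ∃ x ∈ A, ∀ y ∈ F, f x (t • y + (1 - t) • y₀) < c₀) :
    ∃ x ∈ A, f x y₀ < c ∧ ∀ y ∈ F, f x y < c := by
  obtain ⟨y₁, hy₁⟩ := hF
  obtain ⟨m, hm⟩ := hbdd y₁ (hFB hy₁)
  obtain ⟨m₀, hm₀⟩ := hbdd y₀ hy₀
  have hcomb' (t : ℝ) (ht : t ∈ Ioo (0 : ℝ) 1) : ∃ x ∈ A,
      (t : EReal) * (⨆ y ∈ F, f x y) + ((1 - t : ℝ) : EReal) * f x y₀ < c₀ := by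
    obtain ⟨x, hx, hlt⟩ := hcomb t ht
    obtain ⟨y, hy, hmax⟩ := F.exists_max_image (f x) ⟨y₁, hy₁⟩
    refine ⟨x, hx, lt_of_le_of_lt ?_ (hlt y hy)⟩
    calc (t : EReal) * (⨆ y ∈ F, f x y) + ((1 - t : ℝ) : EReal) * f x y₀
        ≤ (t : EReal) * f x y + ((1 - t : ℝ) : EReal) * f x y₀ := by
          gcongr
          · exact EReal.coe_nonneg.2 ht.1.le
          · exact iSup₂_le hmax
      _ ≤ f x (t • y + (1 - t) • y₀) := hconcave x hx y (hFB hy) y₀ hy₀ t ht.1 ht.2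
  obtain ⟨x, hx, hFx, hy₀x⟩ := EConvexOn.exists_lt_and_lt_of_forall_convexComb_lt hA
    (EConvexOn.iSup fun y => EConvexOn.iSup fun hy => hconvex y (hFB hy)) (hconvex y₀ hy₀)
    (m := min m m₀)
    (fun x hx => le_iSup₂_of_le y₁ hy₁ ((EReal.coe_le_coe_iff.2 (min_le_left _ _)).trans (hm x hx)))
    (fun x hx => (EReal.coe_le_coe_iff.2 (min_le_right _ _)).trans (hm₀ x hx)) hc hcomb'
  exact ⟨x, hx, hy₀x, fun y hy => (le_iSup₂ (f := fun y (_ : y ∈ F) => f x y) y hy).trans_lt hFx⟩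

theorem exists_forall_lt_of_iSup_iInf_lt (hA : Convex ℝ A) (hB : Convex ℝ B)
    (hconvex : ∀ y ∈ B, EConvexOn A (f · y)) (hconcave : ∀ x ∈ A, EConcaveOn B (f x))
    (hbdd : ∀ y ∈ B, ∃ m : ℝ, ∀ x ∈ A, (m : EReal) ≤ f x y)
    {F : Finset V} (hF : F.Nonempty) (hFB : ↑F ⊆ B) {c : ℝ}
    (hc : ⨆ y ∈ B, ⨅ x ∈ A, f x y < c) : ∃ x ∈ A, ∀ y ∈ F, f x y < c := by
  classical
  induction hn : F.card using Nat.strong_induction_on generalizing F c with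
  | _ n ih =>
  obtain ⟨y₀, rfl⟩ | hnt := hF.exists_eq_singleton_or_nontrivial
  · have hy₀ : ⨅ x ∈ A, f x y₀ < c :=
      (le_iSup₂ (f := fun y (_ : y ∈ B) => ⨅ x ∈ A, f x y) y₀ (hFB (by simp))).trans_lt hc
    simpa [iInf_lt_iff] using hy₀
  obtain ⟨y₀, hy₀⟩ := hF
  obtain ⟨c₀, hc₀, hc₀c⟩ := EReal.exists_between_coe_real hc
  have hF' : ↑(F.erase y₀) ⊆ B := (Finset.coe_subset.2 (F.erase_subset y₀)).trans hFB
  have hcomb (t : ℝ) (ht : t ∈ Ioo (0 : ℝ) 1) :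
      ∃ x ∈ A, ∀ y ∈ F.erase y₀, f x (t • y + (1 - t) • y₀) < c₀ := by
    have hFt : ↑((F.erase y₀).image fun y => t • y + (1 - t) • y₀) ⊆ B := by
      intro z hz
      obtain ⟨y, hy, rfl⟩ := Finset.mem_image.1 hz
      exact hB (hF' hy) (hFB hy₀) ht.1.le (by linarith [ht.2]) (by ring)
    have hcard := (Finset.card_image_le (f := fun y => t • y + (1 - t) • y₀)).trans_lt
      (Finset.card_erase_lt_of_mem hy₀)
    obtain ⟨x, hx, hlt⟩ := ih _ (hn ▸ hcard) (hnt.erase_nonempty.image _) hFt hc₀ rfl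
    exact ⟨x, hx, fun y hy => hlt _ (Finset.mem_image_of_mem _ hy)⟩
  obtain ⟨x, hx, hxy₀, hxF⟩ := exists_lt_and_forall_lt_of_forall_convexComb_lt hA hconvex
    hconcave hbdd hnt.erase_nonempty hF' (hFB hy₀) (EReal.coe_lt_coe_iff.1 hc₀c) hcomb
  refine ⟨x, hx, fun y hy => ?_⟩
  obtain rfl | hne := eq_or_ne y y₀
  exacts [hxy₀, hxF y (Finset.mem_erase.2 ⟨hne, hy⟩)]

end FiniteIntersection

theorem minimax_theorem_general
    {U : Type*} [AddCommGroup U] [Module ℝ U] [TopologicalSpace U]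
    {V : Type*} [AddCommGroup V] [Module ℝ V]
    (A : Set U) (hA : A.Nonempty) (hAcomp : IsCompact A) (hAconv : Convex ℝ A)
    (B : Set V) (hBconv : Convex ℝ B)
    (f : U → V → EReal)
    (hne_bot : ∀ x ∈ A, ∀ y ∈ B, f x y ≠ ⊥)
    (hlsc : ∀ y ∈ B, LowerSemicontinuousOn (fun x => f x y) A)
    (hconvex : ∀ y ∈ B, ∀ x₁ ∈ A, ∀ x₂ ∈ A, ∀ t : ℝ, 0 < t → t < 1 →
      f (t • x₁ + (1 - t) • x₂) y ≤ (t : EReal) * f x₁ y + ((1 - t : ℝ) : EReal) * f x₂ y)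
    (hconcave : ∀ x ∈ A, ∀ y₁ ∈ B, ∀ y₂ ∈ B, ∀ t : ℝ, 0 < t → t < 1 →
      (t : EReal) * f x y₁ + ((1 - t : ℝ) : EReal) * f x y₂ ≤ f x (t • y₁ + (1 - t) • y₂)) :
    ⨆ y ∈ B, ⨅ x ∈ A, f x y = ⨅ x ∈ A, ⨆ y ∈ B, f x y := by
  refine le_antisymm (le_iInf₂ fun x hx => iSup₂_mono fun y _ => iInf₂_le x hx) ?_
  by_contra! hlt
  obtain ⟨d, hαd, hdβ⟩ := EReal.exists_between_coe_real hlt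
  have hbdd (y) (hy : y ∈ B) : ∃ m : ℝ, ∀ x ∈ A, (m : EReal) ≤ f x y :=
    (hlsc y hy).exists_coe_le_of_ne_bot hAcomp fun x hx => hne_bot x hx y hy
  have hfin (u : Finset B) : ∃ x ∈ A, ∀ y ∈ u, f x y < d := by
    obtain rfl | hu := u.eq_empty_or_nonempty
    · exact hA.imp fun x hx => ⟨hx, by simp⟩
    obtain ⟨x, hx, hlt⟩ := exists_forall_lt_of_iSup_iInf_lt hAconv hBconv hconvex hconcave hbdd
      (hu.map (f := Function.Embedding.subtype _)) (by simp) hαd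
    exact ⟨x, hx, fun y hy => hlt y (Finset.mem_map_of_mem _ hy)⟩
  obtain ⟨x₀, hx₀, hx₀B⟩ : (A ∩ ⋂ y ∈ B, (f · y) ⁻¹' Iic (d : EReal)).Nonempty := by
    rw [nonempty_iff_ne_empty, Ne,
      LowerSemicontinuousOn.inter_biInter_preimage_Iic_eq_empty_iff_exists_finset hAcomp hlsc]
    rintro ⟨u, hu⟩
    obtain ⟨x, hx, hlt⟩ := hfin u
    obtain ⟨y, hy, hdy⟩ := hu x hx
    exact (hlt y hy).not_gt hdy
  have hβd : ⨅ x ∈ A, ⨆ y ∈ B, f x y ≤ d :=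
    iInf₂_le_of_le x₀ hx₀ (iSup₂_le fun y hy => mem_iInter₂.1 hx₀B y hy)
  exact (hβd.trans_lt hdβ).false

/-- Minimax Theorem: Let `A` be a nonempty compact convex subset of a Hausdorff
real topological vector space `U`, `B` a nonempty convex subset of a real vector space `V`, and
`f : A × B → (−∞,+∞]` lower semicontinuous and convex in the first variable and concave in the
second. Then `sup_{y ∈ B} inf_{x ∈ A} f(x,y) = inf_{x ∈ A} sup_{y ∈ B} f(x,y)`. -/
theorem minimax_theorem
    {U : Type*} [AddCommGroup U] [Module ℝ U] [TopologicalSpace U]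
    [IsTopologicalAddGroup U] [ContinuousSMul ℝ U] [T2Space U]
    {V : Type*} [AddCommGroup V] [Module ℝ V]
    (A : Set U) (hA : A.Nonempty) (hAcomp : IsCompact A) (hAconv : Convex ℝ A)
    (B : Set V) (hB : B.Nonempty) (hBconv : Convex ℝ B)
    (f : U → V → EReal)
    (hne_bot : ∀ x ∈ A, ∀ y ∈ B, f x y ≠ ⊥)
    (hlsc : ∀ y ∈ B, LowerSemicontinuousOn (fun x => f x y) A)
    (hconvex : ∀ y ∈ B, ∀ x₁ ∈ A, ∀ x₂ ∈ A, ∀ t : ℝ, 0 < t → t < 1 →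
      f (t • x₁ + (1 - t) • x₂) y ≤ (t : EReal) * f x₁ y + ((1 - t : ℝ) : EReal) * f x₂ y)
    (hconcave : ∀ x ∈ A, ∀ y₁ ∈ B, ∀ y₂ ∈ B, ∀ t : ℝ, 0 < t → t < 1 →
      (t : EReal) * f x y₁ + ((1 - t : ℝ) : EReal) * f x y₂ ≤ f x (t • y₁ + (1 - t) • y₂)) :
    ⨆ y ∈ B, ⨅ x ∈ A, f x y = ⨅ x ∈ A, ⨆ y ∈ B, f x y :=
  minimax_theorem_general A hA hAcomp hAconv B hBconv f hne_bot hlsc hconvex hconcave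
end

section
/- (Ohtsuka) Let X be a locally compact Hausdorff space, k : X × X → [0,∞] a lower semicontinuous symmetric kernel, L ⊆ X a nonempty set and K ⊆ X a nonempty compact set. Then the Chebyshev constant of K relative to L equals the dual energy: sup_{n≥1} M_n(L,K) = q̲(L,K). -/
open MeasureTheory Set ENNReal Filter

variable {X : Type*}

/-!
The uniform measure on an `n`-tuple of points of `L` lies in `M1 L`, and its potential is the
Chebyshev average, so `chebM n ≤ q̲`.

Conversely, let `μ ∈ M1 L` and `c < U^μ` on `K`. At `x ∈ K`, take a simple minorant of `k x ·`
scaled by some `θ < 1`, so that it lies strictly below `k x ·` where it is nonzero, and shrink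
its level sets to compact subsets by inner regularity. Lower semicontinuity and the tube lemma
then give a neighbourhood `V` of `x` and a simple `g` with `∫ g dμ > c` and `g ≤ k x' ·` for all
`x' ∈ V`. Finitely many such `V` cover `K`. The finitely many `g` factor through one simple
function; putting about `N μ(A)` points of `L` into each of its atoms `A` (an atom of positive
mass meets `L`, as `μ L = 1`) gives tuples whose averages of every `g` tend to `∫ g dμ`.
-/

open NNReal Topology

section EmpiricalMeasure

variable [MeasurableSpace X]

instance [TopologicalSpace X] (x : X) : (Measure.dirac x).InnerRegular := by
  refine ⟨fun s hs r hr => ?_⟩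
  by_cases hx : x ∈ s
  · exact ⟨{x}, singleton_subset_iff.2 hx, isCompact_singleton,
      by rwa [Measure.dirac_apply_of_mem (mem_singleton x), ← Measure.dirac_apply_of_mem hx]⟩
  · simp [Measure.dirac_apply' x hs, hx] at hr

noncomputable def empiricalMeasure {n : ℕ} (w : Fin n → X) : Measure X :=
  (n : ℝ≥0∞)⁻¹ • ∑ i, Measure.dirac (w i)

theorem empiricalMeasure_apply_of_forall_mem {n : ℕ} (hn : n ≠ 0) {w : Fin n → X} {s : Set X}
    (hs : ∀ i, w i ∈ s) : empiricalMeasure w s = 1 := by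
  simp [empiricalMeasure, Measure.finsetSum_apply, Measure.dirac_apply_of_mem (hs _),
    ENNReal.inv_mul_cancel (Nat.cast_ne_zero.2 hn)]

theorem empiricalMeasure_mem_M1 [TopologicalSpace X] [T2Space X] [BorelSpace X] {n : ℕ}
    (hn : n ≠ 0) {w : Fin n → X} {L : Set X} (hw : ∀ i, w i ∈ L) : empiricalMeasure w ∈ M1 L :=
  ⟨⟨empiricalMeasure_apply_of_forall_mem hn fun _ => mem_univ _⟩,
    Measure.Regular.smul (ENNReal.inv_ne_top.2 (Nat.cast_ne_zero.2 hn)),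
    empiricalMeasure_apply_of_forall_mem hn hw⟩

theorem potential_empiricalMeasure [MeasurableSingletonClass X] (k : X → X → ℝ≥0∞) {n : ℕ}
    (w : Fin n → X) (x : X) :
    potential k (empiricalMeasure w) x = (∑ i, k x (w i)) / n := by
  simp [potential, empiricalMeasure, ENNReal.div_eq_inv_mul]

theorem chebM_le_qEnergyLow [TopologicalSpace X] [T2Space X] [BorelSpace X] (k : X → X → ℝ≥0∞)
    (L K : Set X) {n : ℕ} (hn : n ≠ 0) : chebM k L K n ≤ qEnergyLow k L K :=
  iSup₂_le fun w hw => le_iSup₂_of_le (empiricalMeasure w) (empiricalMeasure_mem_M1 hn hw) <| by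
    simp only [potential_empiricalMeasure, le_rfl]

end EmpiricalMeasure

theorem ENNReal.exists_lt_one_lt_mul {c T : ℝ≥0∞} (h : c < T) :
    ∃ θ : ℝ≥0, θ < 1 ∧ c < θ * T := by
  have : (𝓝[<] (1 : ℝ≥0)).NeBot := nhdsLT_neBot_of_exists_lt ⟨0, zero_lt_one⟩
  have hlim : Tendsto (fun θ : ℝ≥0 => (θ : ℝ≥0∞) * T) (𝓝[<] 1) (𝓝 T) := by
    simpa using ENNReal.Tendsto.mul_const
      (ENNReal.tendsto_coe.2 (tendsto_nhdsWithin_of_tendsto_nhds tendsto_id)) (Or.inl one_ne_zero)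
  exact ((hlim.eventually_const_lt h).and self_mem_nhdsWithin).exists.imp fun θ h => ⟨h.2, h.1⟩

theorem ENNReal.exists_ne_zero_forall_lt_sum_mul {ι : Type*} {S : Finset ι} {w b : ι → ℝ≥0∞}
    {c : ℝ≥0∞} (hw : ∀ s ∈ S, w s ≠ ∞) (hc : c < ∑ s ∈ S, w s * b s) :
    ∃ ε ≠ 0, ∀ b' : ι → ℝ≥0∞, (∀ s ∈ S, b s ≤ b' s + ε) → c < ∑ s ∈ S, w s * b' s := by
  obtain ⟨δ, hδ0, hδ⟩ := ENNReal.lt_iff_exists_add_pos_lt.1 hc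
  have hW : ∑ s ∈ S, w s + 1 ≠ ∞ := by simpa [ENNReal.sum_eq_top] using hw
  refine ⟨δ / (∑ s ∈ S, w s + 1), by simp [hδ0.ne', hW], fun b' hb' => ?_⟩
  have hεW : (∑ s ∈ S, w s) * (δ / (∑ s ∈ S, w s + 1)) ≤ δ :=
    calc (∑ s ∈ S, w s) * (δ / (∑ s ∈ S, w s + 1))
        ≤ (∑ s ∈ S, w s + 1) * (δ / (∑ s ∈ S, w s + 1)) := by gcongr; exact le_self_add
      _ = δ := ENNReal.mul_div_cancel (by simp) hW
  refine (ENNReal.add_lt_add_iff_right ENNReal.coe_ne_top).1 (hδ.trans_le ?_)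
  calc ∑ s ∈ S, w s * b s ≤ ∑ s ∈ S, w s * (b' s + δ / (∑ s ∈ S, w s + 1)) :=
        Finset.sum_le_sum fun s hs => by gcongr; exact hb' s hs
    _ = ∑ s ∈ S, w s * b' s + (∑ s ∈ S, w s) * (δ / (∑ s ∈ S, w s + 1)) := by
        simp only [mul_add, Finset.sum_add_distrib, Finset.sum_mul]
    _ ≤ ∑ s ∈ S, w s * b' s + δ := by gcongr

section LocalMinorant

variable {α : Type*} [MeasurableSpace α] {μ : Measure α}

theorem MeasureTheory.SimpleFunc.lintegral_comp_eq_sum {Y : Type*} (G : SimpleFunc α Y)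
    (f : Y → ℝ≥0∞) : ∫⁻ a, f (G a) ∂μ = ∑ y ∈ G.range, f y * μ (G ⁻¹' {y}) := by
  rw [← SimpleFunc.map_lintegral, ← SimpleFunc.lintegral_eq_lintegral]
  rfl

theorem exists_simpleFunc_lt_of_lt_lintegral {f : α → ℝ≥0∞} {c : ℝ≥0∞}
    (hc : c < ∫⁻ a, f a ∂μ) :
    ∃ φ : SimpleFunc α ℝ≥0, (∀ a, φ a = 0 ∨ (φ a : ℝ≥0∞) < f a) ∧ c < ∫⁻ a, φ a ∂μ := by
  simp_rw [lintegral_eq_nnreal, lt_iSup_iff] at hc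
  obtain ⟨ψ, hψf, hcψ⟩ := hc
  rw [SimpleFunc.map_lintegral, ← ψ.lintegral_comp_eq_sum] at hcψ
  obtain ⟨θ, hθ1, hcθ⟩ := ENNReal.exists_lt_one_lt_mul hcψ
  refine ⟨SimpleFunc.const α θ * ψ, fun a => ?_, ?_⟩
  · rcases eq_or_ne (ψ a) 0 with h | h
    · simp [h]
    · refine Or.inr (lt_of_lt_of_le ?_ (hψf a))
      simpa using ENNReal.coe_lt_coe.2 (mul_lt_of_lt_one_left (pos_iff_ne_zero.2 h) hθ1)
  · simpa [lintegral_const_mul' _ _ ENNReal.coe_ne_top] using hcθ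

theorem sum_mul_measure_le_lintegral {ι : Type*} {S : Finset ι} {C : ι → Set α}
    (hd : (S : Set ι).PairwiseDisjoint C) (hm : ∀ s ∈ S, MeasurableSet (C s)) {a : ι → ℝ≥0∞}
    {f : α → ℝ≥0∞} (hf : ∀ s ∈ S, ∀ y ∈ C s, a s ≤ f y) :
    ∑ s ∈ S, a s * μ (C s) ≤ ∫⁻ y, f y ∂μ :=
  calc ∑ s ∈ S, a s * μ (C s) = ∑ s ∈ S, ∫⁻ _ in C s, a s ∂μ := by simp
    _ ≤ ∑ s ∈ S, ∫⁻ y in C s, f y ∂μ :=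
        Finset.sum_le_sum fun s hs => setLIntegral_mono' (hm s hs) (hf s hs)
    _ = ∫⁻ y in ⋃ s ∈ S, C s, f y ∂μ := (lintegral_biUnion_finset hd hm f).symm
    _ ≤ ∫⁻ y, f y ∂μ := setLIntegral_le_lintegral _ _

variable [TopologicalSpace α] [IsFiniteMeasure μ] [μ.InnerRegularCompactLTTop]

theorem MeasureTheory.SimpleFunc.exists_isCompact_lt_sum_mul (φ : SimpleFunc α ℝ≥0) {c : ℝ≥0∞}
    (hc : c < ∫⁻ a, φ a ∂μ) :
    ∃ C : ℝ≥0 → Set α, (∀ s, C s ⊆ φ ⁻¹' {s} ∧ IsCompact (C s)) ∧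
      c < ∑ s ∈ φ.range, (s : ℝ≥0∞) * μ (C s) := by
  rw [φ.lintegral_comp_eq_sum] at hc
  obtain ⟨ε, hε, hC⟩ :=
    ENNReal.exists_ne_zero_forall_lt_sum_mul (fun _ _ => ENNReal.coe_ne_top) hc
  choose C hCφ hCc hμC using fun s =>
    (φ.measurableSet_preimage {s}).exists_isCompact_lt_add (measure_ne_top μ _) hε
  exact ⟨C, fun s => ⟨hCφ s, hCc s⟩, hC _ fun s _ => (hμC s).le⟩

end LocalMinorant

section Tube

variable {Y : Type*} [TopologicalSpace X] [TopologicalSpace Y]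

theorem LowerSemicontinuous.exists_isOpen_superset_eventually_lt {k : X → Y → ℝ≥0∞}
    (hk : LowerSemicontinuous fun p : X × Y => k p.1 p.2) {C : Set Y} (hC : IsCompact C)
    {x : X} {s : ℝ≥0∞} (hs : ∀ y ∈ C, s < k x y) :
    ∃ W, IsOpen W ∧ C ⊆ W ∧ ∀ᶠ x' in 𝓝 x, ∀ y ∈ W, s < k x' y := by
  obtain ⟨U, W, hU, hW, hxU, hCW, hUW⟩ := generalized_tube_lemma isCompact_singleton hC
    (hk.isOpen_preimage s) (by rintro ⟨x', y⟩ ⟨rfl, hy⟩; exact hs y hy)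
  exact ⟨W, hW, hCW, Filter.eventually_of_mem (hU.mem_nhds (hxU rfl)) fun x' hx' y hy =>
    hUW (mk_mem_prod hx' hy)⟩

variable [MeasurableSpace Y] [OpensMeasurableSpace Y]

theorem LowerSemicontinuous.exists_simpleFunc_eventually_le {k : X → Y → ℝ≥0∞}
    (hk : LowerSemicontinuous fun p : X × Y => k p.1 p.2) {x : X} {S : Finset ℝ≥0}
    {C : ℝ≥0 → Set Y} (hC : ∀ s ∈ S, IsCompact (C s)) (hCk : ∀ s ∈ S, ∀ y ∈ C s, s < k x y) :
    ∃ g : SimpleFunc Y ℝ≥0, (∀ s ∈ S, ∀ y ∈ C s, s ≤ g y) ∧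
      ∀ᶠ x' in 𝓝 x, ∀ y, (g y : ℝ≥0∞) ≤ k x' y := by
  classical
  choose! W hWo hCW hWk using fun s hs =>
    hk.exists_isOpen_superset_eventually_lt (hC s hs) (hCk s hs)
  have hg : ∀ y, (S.sup fun s => (SimpleFunc.const Y s).restrict (W s)) y =
      S.sup fun s => (W s).indicator (fun _ => s) y := fun y => by
    rw [SimpleFunc.finset_sup_apply]
    exact Finset.sup_congr rfl fun s hs => SimpleFunc.restrict_apply _ (hWo s hs).measurableSet y
  refine ⟨S.sup fun s => (SimpleFunc.const Y s).restrict (W s), fun s hs y hy => ?_, ?_⟩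
  · rw [hg]
    calc s = (W s).indicator (fun _ => s) y := by rw [indicator_of_mem (hCW s hs hy)]
      _ ≤ _ := Finset.le_sup (f := fun s => (W s).indicator (fun _ => s) y) hs
  · filter_upwards [(Filter.eventually_all_finset S).2 hWk] with x' hx' y
    rw [hg, ENNReal.coe_finset_sup, Finset.sup_le_iff]
    intro s hs
    by_cases hy : y ∈ W s
    · simpa [hy] using (hx' s hs y hy).le
    · simp [hy]

end Tube

theorem LowerSemicontinuous.exists_simpleFunc_lt_lintegral_eventually_le [TopologicalSpace X]
    [T2Space X] [MeasurableSpace X] [OpensMeasurableSpace X] {k : X → X → ℝ≥0∞}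
    (hk : LowerSemicontinuous fun p : X × X => k p.1 p.2) (μ : Measure X) [IsFiniteMeasure μ]
    [μ.InnerRegularCompactLTTop] {x : X} {c : ℝ≥0∞} (hc : c < ∫⁻ y, k x y ∂μ) :
    ∃ g : SimpleFunc X ℝ≥0, c < ∫⁻ y, g y ∂μ ∧ ∀ᶠ x' in 𝓝 x, ∀ y, (g y : ℝ≥0∞) ≤ k x' y := by
  classical
  obtain ⟨φ, hφk, hcφ⟩ := exists_simpleFunc_lt_of_lt_lintegral hc
  obtain ⟨C, hC, hcC⟩ := φ.exists_isCompact_lt_sum_mul hcφ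
  set S := φ.range.filter (· ≠ 0)
  have hCk : ∀ s ∈ S, ∀ y ∈ C s, (s : ℝ≥0∞) < k x y := fun s hs y hy => by
    obtain rfl : φ y = s := (hC s).1 hy
    exact (hφk y).resolve_left (Finset.mem_filter.1 hs).2
  obtain ⟨g, hgC, hgk⟩ := hk.exists_simpleFunc_eventually_le (fun s _ => (hC s).2) hCk
  refine ⟨g, ?_, hgk⟩
  have hdisj : (S : Set ℝ≥0).PairwiseDisjoint C := fun s _ t _ hst =>
    ((disjoint_singleton.2 hst).preimage φ).mono (hC s).1 (hC t).1
  calc c < ∑ s ∈ φ.range, (s : ℝ≥0∞) * μ (C s) := hcC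
    _ = ∑ s ∈ S, (s : ℝ≥0∞) * μ (C s) :=
        (Finset.sum_filter_of_ne fun s _ h => by rintro rfl; simp at h).symm
    _ ≤ ∫⁻ y, g y ∂μ := sum_mul_measure_le_lintegral hdisj
        (fun s _ => (hC s).2.isClosed.measurableSet) fun s hs y hy => by
          exact_mod_cast hgC s hs y hy

theorem exists_fin_tuple_sum_eq_sum_nsmul {Y M : Type*} [AddCommMonoid M] (A : Finset Y)
    (m : Y → ℕ) (v : Y → X) :
    ∃ w : Fin (∑ a ∈ A, m a) → X, (∀ i, ∃ a ∈ A, 0 < m a ∧ w i = v a) ∧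
      ∀ h : X → M, ∑ i, h (w i) = ∑ a ∈ A, m a • h (v a) := by
  let e : (Σ a : A, Fin (m a)) ≃ Fin (∑ a ∈ A, m a) :=
    Fintype.equivFinOfCardEq (by simp [Finset.sum_attach A m])
  refine ⟨fun i => v (e.symm i).1, fun i => ⟨_, (e.symm i).1.2, (e.symm i).2.pos, rfl⟩,
    fun h => ?_⟩
  rw [e.symm.sum_comp (fun p => h (v p.1)), Fintype.sum_sigma]
  simpa using Finset.sum_coe_sort A fun a => m a • h (v a)

theorem tendsto_ceil_mul_div_sum_ceil {Y : Type*} {A : Finset Y} {p : Y → ℝ}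
    (hp : ∀ a ∈ A, 0 ≤ p a) (hA : ∑ a ∈ A, p a = 1) {a : Y} (ha : a ∈ A) :
    Tendsto (fun N : ℕ => (⌈p a * N⌉₊ : ℝ) / ∑ b ∈ A, ⌈p b * N⌉₊) atTop (𝓝 (p a)) := by
  have hlim : ∀ b ∈ A, Tendsto (fun N : ℕ => (⌈p b * N⌉₊ : ℝ) / N) atTop (𝓝 (p b)) :=
    fun b hb => (tendsto_nat_ceil_mul_div_atTop (hp b hb)).comp tendsto_natCast_atTop_atTop
  have hsum := tendsto_finsetSum A hlim
  rw [hA] at hsum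
  simpa using ((hlim a ha).div hsum one_ne_zero).congr' <|
    (eventually_ne_atTop 0).mono fun N hN => by
      simp only [Pi.div_apply, ← Finset.sum_div,
        div_div_div_cancel_right₀ (Nat.cast_ne_zero.2 hN : (N : ℝ) ≠ 0)]

section EmpiricalApproximation

variable {α : Type*} [MeasurableSpace α] {μ : Measure α}

theorem inter_nonempty_of_measure_ne_zero [IsProbabilityMeasure μ] {L s : Set α} (hL : μ L = 1)
    (hs : MeasurableSet s) (h : μ s ≠ 0) : (s ∩ L).Nonempty := by
  by_contra hsL
  have hLs : L ⊆ sᶜ := fun y hy hys => hsL ⟨y, hys, hy⟩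
  exact h <| (prob_compl_eq_one_iff hs).1 <| le_antisymm prob_le_one (hL ▸ measure_mono hLs)

def MeasureTheory.SimpleFunc.pi {ι β : Type*} [Finite ι] (g : ι → SimpleFunc α β) :
    SimpleFunc α (ι → β) where
  toFun a i := g i a
  measurableSet_fiber' b := by
    have : (fun a i => g i a) ⁻¹' {b} = ⋂ i, g i ⁻¹' {b i} := by ext; simp [funext_iff]
    exact this ▸ MeasurableSet.iInter fun i => (g i).measurableSet_fiber (b i)
  finite_range' := (Set.Finite.pi fun i => (g i).finite_range).subset <| by
    rintro _ ⟨a, rfl⟩ i -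
    exact ⟨a, rfl⟩

theorem exists_fin_tuple_mem_sum_comp_eq [IsProbabilityMeasure μ] {L : Set α} (hL : μ L = 1)
    {Y : Type*} (G : SimpleFunc α Y) (m : Y → ℕ) (hm : ∀ a, 0 < m a → μ (G ⁻¹' {a}) ≠ 0) :
    ∃ w : Fin (∑ a ∈ G.range, m a) → α, (∀ i, w i ∈ L) ∧
      ∀ f : Y → ℝ≥0∞, ∑ i, f (G (w i)) = ∑ a ∈ G.range, m a • f a := by
  have := nonempty_of_isProbabilityMeasure μ
  have hv : ∀ a ∈ G.range, ∃ y, G y = a ∧ (μ (G ⁻¹' {a}) ≠ 0 → y ∈ L) := fun a ha => by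
    by_cases h : μ (G ⁻¹' {a}) = 0
    · obtain ⟨y, rfl⟩ := G.mem_range.1 ha
      exact ⟨y, rfl, fun h' => (h' h).elim⟩
    · obtain ⟨y, hyG, hyL⟩ := inter_nonempty_of_measure_ne_zero hL (G.measurableSet_fiber a) h
      exact ⟨y, hyG, fun _ => hyL⟩
  choose! v hvG hvL using hv
  obtain ⟨w, hw_mem, hw_sum⟩ := exists_fin_tuple_sum_eq_sum_nsmul (M := ℝ≥0∞) G.range m v
  refine ⟨w, fun i => ?_, fun f => ?_⟩
  · obtain ⟨a, ha, hpos, hwv⟩ := hw_mem i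
    exact hwv ▸ hvL a ha (hm a hpos)
  · rw [hw_sum fun x => f (G x)]
    exact Finset.sum_congr rfl fun a ha => by rw [hvG a ha]

theorem exists_tendsto_average_comp_simpleFunc [IsProbabilityMeasure μ] {L : Set α}
    (hL : μ L = 1) {Y : Type*} (G : SimpleFunc α Y) :
    ∃ (n : ℕ → ℕ) (w : ∀ N, Fin (n N) → α), (∀ N, n N ≠ 0) ∧ (∀ N i, w N i ∈ L) ∧
      ∀ f : Y → ℝ≥0, Tendsto (fun N => (∑ i, (f (G (w N i)) : ℝ≥0∞)) / n N) atTop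
        (𝓝 (∫⁻ y, f (G y) ∂μ)) := by
  set A := G.range
  set p : Y → ℝ := fun a => (μ (G ⁻¹' {a})).toReal
  have hp1 : ∑ a ∈ A, p a = 1 := by
    rw [← ENNReal.toReal_sum fun a _ => measure_ne_top μ _, G.sum_range_measure_preimage_singleton,
      measure_univ, ENNReal.toReal_one]
  -- the `N`-th tuple puts `⌈μ(G ⁻¹' {a}) (N + 1)⌉` points of `L` into the atom `G ⁻¹' {a}`
  set m : ℕ → Y → ℕ := fun N a => ⌈p a * (N + 1 : ℕ)⌉₊
  have hm : ∀ N a, 0 < m N a → μ (G ⁻¹' {a}) ≠ 0 := fun N a hpos h0 => by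
    simp [m, p, h0] at hpos
  choose w hwL hw_sum using fun N => exists_fin_tuple_mem_sum_comp_eq hL G (m N) (hm N)
  have hn0 : ∀ N, ∑ a ∈ A, m N a ≠ 0 := fun N h => by
    have : ((N + 1 : ℕ) : ℝ) ≤ ∑ a ∈ A, (m N a : ℝ) :=
      calc ((N + 1 : ℕ) : ℝ) = ∑ a ∈ A, p a * (N + 1 : ℕ) := by
            rw [← Finset.sum_mul, hp1, one_mul]
        _ ≤ ∑ a ∈ A, (m N a : ℝ) := Finset.sum_le_sum fun a _ => Nat.le_ceil _
    rw [← Nat.cast_sum, h] at this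
    push_cast at this
    linarith
  refine ⟨fun N => ∑ a ∈ A, m N a, w, hn0, hwL, fun f => ?_⟩
  have havg : ∀ N, (∑ i, (f (G (w N i)) : ℝ≥0∞)) / (∑ a ∈ A, m N a : ℕ) =
      ∑ a ∈ A, (f a : ℝ≥0∞) * ENNReal.ofReal ((m N a : ℝ) / (∑ a ∈ A, m N a : ℕ)) := fun N => by
    rw [hw_sum N fun a => (f a : ℝ≥0∞), div_eq_mul_inv, Finset.sum_mul]
    refine Finset.sum_congr rfl fun a _ => ?_
    rw [ENNReal.ofReal_div_of_pos (Nat.cast_pos.2 (Nat.pos_of_ne_zero (hn0 N))),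
      ENNReal.ofReal_natCast, ENNReal.ofReal_natCast, nsmul_eq_mul, div_eq_mul_inv]
    ring
  rw [G.lintegral_comp_eq_sum fun a => (f a : ℝ≥0∞)]
  refine (tendsto_finsetSum A fun a ha => ENNReal.Tendsto.const_mul ?_
    (Or.inr ENNReal.coe_ne_top)).congr fun N => (havg N).symm
  rw [← ENNReal.ofReal_toReal (measure_ne_top μ _)]
  refine ENNReal.tendsto_ofReal ?_
  simpa [Function.comp_def, m] using
    (tendsto_ceil_mul_div_sum_ceil (fun a _ => ENNReal.toReal_nonneg) hp1 ha).comp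
      (tendsto_add_atTop_nat 1)

theorem exists_tuple_forall_lt_average [IsProbabilityMeasure μ] {L : Set α} (hL : μ L = 1)
    {ι : Type*} [Finite ι] (g : ι → SimpleFunc α ℝ≥0) {c : ℝ≥0∞}
    (hc : ∀ j, c < ∫⁻ y, g j y ∂μ) :
    ∃ n ≠ 0, ∃ w : Fin n → α, (∀ i, w i ∈ L) ∧ ∀ j, c < (∑ i, (g j (w i) : ℝ≥0∞)) / n := by
  obtain ⟨n, w, hn, hwL, hlim⟩ := exists_tendsto_average_comp_simpleFunc hL (SimpleFunc.pi g)
  obtain ⟨N, hN⟩ := (eventually_all.2 fun j => (hlim (· j)).eventually_const_lt (hc j)).exists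
  exact ⟨n N, hn N, w N, hwL N, hN⟩

end EmpiricalApproximation

theorem iInf_le_chebM {n : ℕ} (k : X → X → ℝ≥0∞) {L : Set X} (K : Set X) {w : Fin n → X}
    (hw : ∀ i, w i ∈ L) : ⨅ x ∈ K, (∑ i, k x (w i)) / (n : ℝ≥0∞) ≤ chebM k L K n :=
  le_iSup₂ (f := fun (w : Fin n → X) (_ : ∀ i, w i ∈ L) => ⨅ x ∈ K, (∑ i, k x (w i)) / (n : ℝ≥0∞))
    w hw

theorem iInf_potential_le_iSup_chebM [TopologicalSpace X] [T2Space X] [MeasurableSpace X]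
    [BorelSpace X] {k : X → X → ℝ≥0∞} (hk : LowerSemicontinuous fun p : X × X => k p.1 p.2)
    {L K : Set X} (hK : IsCompact K) {μ : Measure X} (hμ : μ ∈ M1 L) :
    ⨅ x ∈ K, potential k μ x ≤ ⨆ n : ℕ, chebM k L K (n + 1) := by
  obtain ⟨_, _, hμL⟩ := hμ
  refine le_of_forall_lt fun c hc => ?_
  obtain ⟨c', hcc', hc'⟩ := exists_between hc
  choose! g hg_int hg_le using fun x (hx : x ∈ K) =>
    hk.exists_simpleFunc_lt_lintegral_eventually_le μ (hc'.trans_le (iInf₂_le x hx))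
  obtain ⟨t, htK, hKt⟩ := hK.elim_nhds_subcover _ hg_le
  obtain ⟨n, hn, w, hwL, hw⟩ := exists_tuple_forall_lt_average hμL (fun x : t => g x)
    fun x => hg_int x (htK x x.2)
  have hbound : c' ≤ ⨅ x ∈ K, (∑ i, k x (w i)) / (n : ℝ≥0∞) := le_iInf₂ fun x hx => by
    obtain ⟨x₀, hx₀, hxV⟩ := mem_iUnion₂.1 (hKt hx)
    exact (hw ⟨x₀, hx₀⟩).le.trans
      (ENNReal.div_le_div_right (Finset.sum_le_sum fun i _ => hxV _) _)
  calc c < c' := hcc'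
    _ ≤ chebM k L K n := hbound.trans (iInf_le_chebM k K hwL)
    _ ≤ ⨆ n : ℕ, chebM k L K (n + 1) :=
        le_iSup_of_le (n - 1) (by rw [Nat.sub_add_cancel (Nat.one_le_iff_ne_zero.2 hn)])

theorem ohtsuka_cheb_eq_qEnergyLow_general
    {X : Type*} [TopologicalSpace X] [T2Space X]
    [MeasurableSpace X] [BorelSpace X]
    (k : X → X → ℝ≥0∞)
    (hk : LowerSemicontinuous fun p : X × X => k p.1 p.2)
    (L K : Set X) (hK : IsCompact K) :
    (⨆ n : ℕ, chebM k L K (n + 1)) = qEnergyLow k L K :=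
  le_antisymm (iSup_le fun n => chebM_le_qEnergyLow k L K n.succ_ne_zero)
    (iSup₂_le fun _ hμ => iInf_potential_le_iSup_chebM hk hK hμ)

/-- Ohtsuka: For nonempty `L` and nonempty compact `K`, the Chebyshev constant
of `K` relative to `L` equals the dual energy: `sup_{n ≥ 1} M_n(L,K) = q̲(L,K)`. -/
theorem ohtsuka_cheb_eq_qEnergyLow
    {X : Type*} [TopologicalSpace X] [LocallyCompactSpace X] [T2Space X]
    [MeasurableSpace X] [BorelSpace X]
    (k : X → X → ℝ≥0∞)
    (hk : LowerSemicontinuous fun p : X × X => k p.1 p.2)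
    (hksymm : ∀ x y, k x y = k y x)
    (L K : Set X) (hLne : L.Nonempty) (hK : IsCompact K) (hKne : K.Nonempty) :
    (⨆ n : ℕ, chebM k L K (n + 1)) = qEnergyLow k L K :=
  ohtsuka_cheb_eq_qEnergyLow_general k hk L K hK
end
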